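/- arXiv:1211.4354 — 4 statements merged into one kernel-verified Lean document; each statement's English description precedes it below -/
import Mathlib

section
/- (Nonresonance in Region 1.) Let a, b be real numbers with b² < 4a, let α ∈ ℂ satisfy α⁴ − bα² + a = 0, and let k ≥ 2 be an integer. Then (kα)⁴ − b(kα)² + a ≠ 0. Hence the recursion relation p(kα)·a_k = F₁^{(k)} + F₂^{(k)} uniquely determines the coefficient a_k for every k ≥ 2. -/
/-!
Put `β = α²`, a root of the quadratic `q(X) = X² − bX + a`. If also `p(kα) = 0`, then `k²β` is a
second root of `q`, distinct from `β` because `a ≠ 0` and `k² ≠ 1`. By Vieta, `β + k²β = b`, so `β`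
is real; but `q` has negative discriminant and therefore no real root.
-/

theorem add_eq_of_sq_sub_mul_add_eq_zero {R : Type*} [CommRing R] [IsDomain R] {a b x y : R}
    (hx : x ^ 2 - b * x + a = 0) (hy : y ^ 2 - b * y + a = 0) (hxy : x ≠ y) : x + y = b := by
  have hfactor : (x - y) * (x + y - b) = 0 := by linear_combination hx - hy
  have hsum := (mul_eq_zero.mp hfactor).resolve_left (sub_ne_zero.mpr hxy)
  linear_combination hsum

theorem sq_sub_mul_add_pos {a b : ℝ} (hab : b ^ 2 < 4 * a) (r : ℝ) : 0 < r ^ 2 - b * r + a := by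
  nlinarith [sq_nonneg (2 * r - b)]

theorem Complex.ofReal_sq_sub_mul_add_ne_zero {a b : ℝ} (hab : b ^ 2 < 4 * a) (r : ℝ) :
    (r : ℂ) ^ 2 - b * r + a ≠ 0 := by
  exact_mod_cast (sq_sub_mul_add_pos hab r).ne'

theorem mul_root_sq_sub_mul_add_ne_zero {a b c : ℝ} (hab : b ^ 2 < 4 * a) (hc₁ : c ≠ 1)
    (hc₂ : c ≠ -1) {β : ℂ} (hβ : β ^ 2 - b * β + a = 0) : (c * β) ^ 2 - b * (c * β) + a ≠ 0 := by
  intro hcβ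
  have hβ₀ : β ≠ 0 := by
    rintro rfl
    exact Complex.ofReal_sq_sub_mul_add_ne_zero hab 0 (by simpa using hβ)
  have hne : β ≠ c * β := fun h =>
    hc₁ (Complex.ofReal_injective (mul_right_cancel₀ hβ₀ (by simpa using h.symm)))
  have hsum : β + c * β = b := add_eq_of_sq_sub_mul_add_eq_zero hβ hcβ hne
  have hc : (c : ℂ) + 1 ≠ 0 := by norm_cast; contrapose! hc₂; linarith
  have hreal : β = ((b / (c + 1) : ℝ) : ℂ) := by
    push_cast
    rw [eq_div_iff hc]
    linear_combination hsum
  exact Complex.ofReal_sq_sub_mul_add_ne_zero hab _ (hreal ▸ hβ)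

/-- Nonresonance in Region 1 (`b² < 4a`): if `α` is a root of `λ⁴ − bλ² + a` and
`k ≥ 2` is an integer, then `p(kα) = (kα)⁴ − b(kα)² + a ≠ 0`; hence the recursion
`p(kα)·a_k = F₁⁽ᵏ⁾ + F₂⁽ᵏ⁾` uniquely determines the coefficient `a_k` for every `k ≥ 2`. -/
theorem region1_nonresonance (a b : ℝ) (hab : b ^ 2 < 4 * a) (α : ℂ)
    (hα : α ^ 4 - (b : ℂ) * α ^ 2 + (a : ℂ) = 0) (k : ℕ) (hk : 2 ≤ k) :
    ((k : ℂ) * α) ^ 4 - (b : ℂ) * ((k : ℂ) * α) ^ 2 + (a : ℂ) ≠ 0 ∧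
    ∀ F x y : ℂ,
      (((k : ℂ) * α) ^ 4 - (b : ℂ) * ((k : ℂ) * α) ^ 2 + (a : ℂ)) * x = F →
      (((k : ℂ) * α) ^ 4 - (b : ℂ) * ((k : ℂ) * α) ^ 2 + (a : ℂ)) * y = F →
      x = y := by
  have hk₂ : (2 : ℝ) ≤ k := by exact_mod_cast hk
  have hp := mul_root_sq_sub_mul_add_ne_zero (c := (k : ℝ) ^ 2) (β := α ^ 2) hab
    (by nlinarith) (by nlinarith) (by linear_combination hα)
  replace hp : ((k : ℂ) * α) ^ 4 - (b : ℂ) * ((k : ℂ) * α) ^ 2 + (a : ℂ) ≠ 0 := fun h =>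
    hp (by push_cast; linear_combination h)
  exact ⟨hp, fun F x y hx hy => mul_left_cancel₀ hp (hx.trans hy.symm)⟩
end

section
/- (Homogeneity of the series coefficients: a_k = φ_k a₁^k.) Let a, b, c, d, g, h be real numbers and α ∈ ℂ. Suppose the sequence (a_k)_{k≥1} of complex numbers satisfies the reversible recursion with parameter α. Then for every t ∈ ℂ the rescaled sequence (t^k a_k)_{k≥1} also satisfies the reversible recursion with parameter α. Consequently, if p(kα) = (kα)⁴ − b(kα)² + a ≠ 0 for all integers k ≥ 2, then each coefficient has the form a_k = φ_k a₁^k where φ_k depends only on α and on a, b, c, d, g, h (and not on a₁). -/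
/-!
Every term of the recursion at index `k` is a product of coefficients whose indices sum to `k`,
so replacing `a_k` by `t^k a_k` multiplies both sides by `t^k`. When `p(kα) ≠ 0` for `k ≥ 2` the
recursion determines `a_k` from `a_1, …, a_{k-1}`, so a solution is fixed by `a_1`. Hence, if some
solution `φ` has `φ_1 = 1`, every solution equals its rescaling `(a_1^k φ_k)`; otherwise no solution
has `a_1 ≠ 0` (its rescaling by `a_1⁻¹` would be one), and every solution vanishes.
-/

/-- A sequence `(a_k)_{k≥1}` satisfies the reversible recursion with parameter `α`
if for every `k ≥ 2`:
`((kα)⁴ − b(kα)² + a)·a_k = Σ_{i=1}^{k−1} (c(k−i)²α² + d·i(k−i)α² + g)·a_{k−i} a_i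
  + h·Σ_{j=2}^{k−1} Σ_{l=1}^{j−1} a_{k−j} a_{j−l} a_l`. -/
def ReversibleRec (a b c d g h : ℝ) (α : ℂ) (A : ℕ → ℂ) : Prop :=
  ∀ k : ℕ, 2 ≤ k →
    (((k : ℂ) * α) ^ 4 - (b : ℂ) * ((k : ℂ) * α) ^ 2 + (a : ℂ)) * A k =
      (∑ i ∈ Finset.Ico 1 k,
        ((c : ℂ) * ((k - i : ℕ) : ℂ) ^ 2 * α ^ 2
          + (d : ℂ) * (i : ℂ) * ((k - i : ℕ) : ℂ) * α ^ 2 + (g : ℂ))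
          * A (k - i) * A i)
      + (h : ℂ) * ∑ j ∈ Finset.Ico 2 k, ∑ l ∈ Finset.Ico 1 j,
          A (k - j) * A (j - l) * A l

namespace ReversibleRec

variable {a b c d g h : ℝ} {α : ℂ}

variable (c d g h α) in
def rhs (A : ℕ → ℂ) (k : ℕ) : ℂ :=
  (∑ i ∈ Finset.Ico 1 k,
    ((c : ℂ) * ((k - i : ℕ) : ℂ) ^ 2 * α ^ 2
      + (d : ℂ) * (i : ℂ) * ((k - i : ℕ) : ℂ) * α ^ 2 + (g : ℂ))
      * A (k - i) * A i)
  + (h : ℂ) * ∑ j ∈ Finset.Ico 2 k, ∑ l ∈ Finset.Ico 1 j,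
      A (k - j) * A (j - l) * A l

lemma rhs_pow_mul (A : ℕ → ℂ) (t : ℂ) (k : ℕ) :
    rhs c d g h α (fun n => t ^ n * A n) k = t ^ k * rhs c d g h α A k := by
  simp only [rhs, mul_add, Finset.mul_sum]
  congr 1
  · refine Finset.sum_congr rfl fun i hi => ?_
    rw [← pow_sub_mul_pow t (Finset.mem_Ico.1 hi).2.le]
    ring
  · refine Finset.sum_congr rfl fun j hj => Finset.sum_congr rfl fun l hl => ?_
    rw [← pow_sub_mul_pow t (Finset.mem_Ico.1 hj).2.le,
      ← pow_sub_mul_pow t (Finset.mem_Ico.1 hl).2.le]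
    ring

lemma rhs_congr {A B : ℕ → ℂ} {k : ℕ} (hAB : ∀ i, 1 ≤ i → i < k → A i = B i) :
    rhs c d g h α A k = rhs c d g h α B k := by
  unfold rhs
  congr 1
  · refine Finset.sum_congr rfl fun i hi => ?_
    rw [Finset.mem_Ico] at hi
    rw [hAB i hi.1 hi.2, hAB (k - i) (by omega) (by omega)]
  · refine congrArg _ (Finset.sum_congr rfl fun j hj => Finset.sum_congr rfl fun l hl => ?_)
    rw [Finset.mem_Ico] at hj hl
    rw [hAB (k - j) (by omega) (by omega), hAB (j - l) (by omega) (by omega),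
      hAB l hl.1 (by omega)]

lemma iff_rhs {A : ℕ → ℂ} : ReversibleRec a b c d g h α A ↔ ∀ k : ℕ, 2 ≤ k →
    (((k : ℂ) * α) ^ 4 - (b : ℂ) * ((k : ℂ) * α) ^ 2 + (a : ℂ)) * A k = rhs c d g h α A k :=
  Iff.rfl

lemma pow_mul {A : ℕ → ℂ} (hA : ReversibleRec a b c d g h α A) (t : ℂ) :
    ReversibleRec a b c d g h α (fun n => t ^ n * A n) := by
  rw [iff_rhs] at hA ⊢
  intro k hk
  rw [rhs_pow_mul, ← hA k hk]
  ring

lemma zero : ReversibleRec a b c d g h α 0 :=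
  fun _ _ => by simp

lemma eq_of_one_eq
    (hp : ∀ k : ℕ, 2 ≤ k → ((k : ℂ) * α) ^ 4 - (b : ℂ) * ((k : ℂ) * α) ^ 2 + (a : ℂ) ≠ 0)
    {A B : ℕ → ℂ} (hA : ReversibleRec a b c d g h α A) (hB : ReversibleRec a b c d g h α B)
    (h1 : A 1 = B 1) : ∀ k, 1 ≤ k → A k = B k := by
  intro k
  induction k using Nat.strong_induction_on with
  | _ k ih =>
    intro hk
    obtain rfl | hk2 := eq_or_lt_of_le hk
    · exact h1
    refine mul_left_cancel₀ (hp k hk2) ?_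
    rw [iff_rhs.1 hA k hk2, iff_rhs.1 hB k hk2]
    exact rhs_congr fun i hi1 hik => ih i hik hi1

end ReversibleRec

/-- Homogeneity of the series coefficients (`a_k = φ_k a₁^k`): if `(a_k)` satisfies
the reversible recursion with parameter `α`, so does the rescaled sequence
`(t^k a_k)` for every `t ∈ ℂ`. Consequently, if `p(kα) ≠ 0` for all `k ≥ 2`, then
there are coefficients `φ_k`, depending only on `α` and on `a,b,c,d,g,h` (not on
`a₁`), with `a_k = φ_k a₁^k` for every sequence satisfying the recursion. -/
theorem coefficients_homogeneity (a b c d g h : ℝ) (α : ℂ) :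
    (∀ (A : ℕ → ℂ) (t : ℂ), ReversibleRec a b c d g h α A →
      ReversibleRec a b c d g h α (fun k => t ^ k * A k)) ∧
    ((∀ k : ℕ, 2 ≤ k →
        ((k : ℂ) * α) ^ 4 - (b : ℂ) * ((k : ℂ) * α) ^ 2 + (a : ℂ) ≠ 0) →
      ∃ φ : ℕ → ℂ, ∀ A : ℕ → ℂ, ReversibleRec a b c d g h α A →
        ∀ k : ℕ, 1 ≤ k → A k = φ k * (A 1) ^ k) := by
  refine ⟨fun A t hA => hA.pow_mul t, fun hp => ?_⟩
  by_cases hnorm : ∃ φ, ReversibleRec a b c d g h α φ ∧ φ 1 = 1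
  · obtain ⟨φ, hφ, hφ1⟩ := hnorm
    refine ⟨φ, fun A hA k hk => ?_⟩
    rw [hA.eq_of_one_eq hp (hφ.pow_mul (A 1)) (by simp [hφ1]) k hk, mul_comm]
  · refine ⟨0, fun A hA k hk => ?_⟩
    have hA1 : A 1 = 0 := by
      by_contra hA1
      exact hnorm ⟨_, hA.pow_mul (A 1)⁻¹, by simp [hA1]⟩
    simp [hA.eq_of_one_eq hp ReversibleRec.zero hA1 k hk]
end

section
/- (Main theorem, reversible case: the series is a solution homoclinic to the origin.) Let a, b, c, d, g, h be real numbers, let α ∈ ℂ with Re α < 0, and let (a_k)_{k≥1} be a sequence of complex numbers satisfying the reversible recursion with parameter α, where in addition α⁴ − bα² + a = 0 (so the k = 1 equation also holds). Assume the geometric bound |a_k| ≤ M q^k for all k ≥ 1, with M ≥ 0 and 0 < q ≤ 1. Then u(z) := Σ_{k=1}^∞ a_k e^{kαz} defines an infinitely differentiable ℂ-valued function on (0, ∞) which satisfies u'''' − b u'' + a u = c u u'' + d (u')² + g u² + h u³ on (0, ∞), and u(z), u'(z), u''(z), u'''(z) all tend to 0 as z → +∞. -/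
open Filter

private lemma tsum_shift {g : ℕ → ℂ} (h0 : g 0 = 0) : ∑' k, g (k + 1) = ∑' k, g k := by
  by_cases hs : Summable g
  · rw [Summable.tsum_eq_zero_add hs, h0, zero_add]
  · rw [tsum_eq_zero_of_not_summable hs, tsum_eq_zero_of_not_summable
      (fun hh => hs ((summable_nat_add_iff 1).mp hh))]

private lemma antidiag_to_Ico (m : ℕ) (F : ℕ → ℕ → ℂ) (h1 : ∀ j, F 0 j = 0)
    (h2 : ∀ i, F i 0 = 0) :
    ∑ kl ∈ Finset.HasAntidiagonal.antidiagonal m, F kl.1 kl.2 = ∑ i ∈ Finset.Ico 1 m, F i (m - i) := by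
  rw [Finset.Nat.sum_antidiagonal_eq_sum_range_succ_mk]
  refine (Finset.sum_subset ?_ ?_).symm
  · intro x hx
    simp only [Finset.mem_Ico] at hx
    exact Finset.mem_range.2 (by omega)
  · intro x hx hnx
    simp only [Finset.mem_range] at hx
    simp only [Finset.mem_Ico, not_and, not_lt] at hnx
    rcases Nat.eq_zero_or_pos x with h | h
    · subst h; exact h1 _
    · have hxm : m - x = 0 := by omega
      rw [hxm]; exact h2 x

private lemma antidiag_to_Ico' (m : ℕ) (F : ℕ → ℕ → ℂ) (h1 : ∀ j, F 0 j = 0)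
    (h2 : ∀ i, F i 0 = 0) :
    ∑ kl ∈ Finset.HasAntidiagonal.antidiagonal m, F kl.1 kl.2 = ∑ i ∈ Finset.Ico 1 m, F (m - i) i := by
  rw [antidiag_to_Ico m F h1 h2]
  refine Finset.sum_nbij' (i := fun x => m - x) (j := fun x => m - x) ?_ ?_ ?_ ?_ ?_ <;>
      intro x hx <;> simp only [Finset.mem_Ico] at hx ⊢ <;>
    first
      | omega
      | rw [Nat.sub_sub_self (by omega : x ≤ m)]

noncomputable section

private def tA (A : ℕ → ℂ) : ℕ → ℂ := fun k => if k = 0 then 0 else A k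

private def pt (A : ℕ → ℂ) (α : ℂ) (n k : ℕ) (z : ℝ) : ℂ :=
  tA A k * ((k : ℂ) * α) ^ n * Complex.exp ((k : ℂ) * α * z)

private def Ss (A : ℕ → ℂ) (α : ℂ) (n : ℕ) (z : ℝ) : ℂ := ∑' k, pt A α n k z

private lemma re_aux (α : ℂ) (k : ℕ) (z : ℝ) :
    ((k : ℂ) * α * (z : ℂ)).re = (k : ℝ) * (α.re * z) := by
  simp [Complex.mul_re]
  ring

private lemma pt_norm_le {A : ℕ → ℂ} {α : ℂ} {M q : ℝ} (hM : 0 ≤ M) (hq0 : 0 ≤ q)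
    (hbound : ∀ k : ℕ, 1 ≤ k → ‖A k‖ ≤ M * q ^ k)
    (n k : ℕ) (z : ℝ) :
    ‖pt A α n k z‖ ≤ M * ‖α‖ ^ n * (k : ℝ) ^ n * (q * Real.exp (α.re * z)) ^ k := by
  rcases Nat.eq_zero_or_pos k with rfl | hk
  · have hz : pt A α n 0 z = 0 := by simp [pt, tA]
    rw [hz, norm_zero]
    exact mul_nonneg (mul_nonneg (mul_nonneg hM (pow_nonneg (norm_nonneg α) n))
      (pow_nonneg (Nat.cast_nonneg 0) n))
      (pow_nonneg (mul_nonneg hq0 (Real.exp_pos _).le) 0)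
  · have h1 : ‖pt A α n k z‖
        = ‖A k‖ * ((k : ℝ) * ‖α‖) ^ n * Real.exp ((k : ℝ) * (α.re * z)) := by
      rw [pt, tA, if_neg (by omega)]
      rw [norm_mul, norm_mul, norm_pow, norm_mul, Complex.norm_natCast,
        Complex.norm_exp, re_aux]
    rw [h1]
    have h2 : ‖A k‖ ≤ M * q ^ k := hbound k hk
    calc ‖A k‖ * ((k : ℝ) * ‖α‖) ^ n * Real.exp ((k : ℝ) * (α.re * z))
        ≤ (M * q ^ k) * ((k : ℝ) * ‖α‖) ^ n * Real.exp ((k : ℝ) * (α.re * z)) := by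
          gcongr
      _ = M * ‖α‖ ^ n * (k : ℝ) ^ n * (q * Real.exp (α.re * z)) ^ k := by
          rw [mul_pow, mul_pow, ← Real.exp_nat_mul]
          ring

private lemma summable_aux {t : ℝ} (ht0 : 0 ≤ t) (ht : t < 1) (C : ℝ) (n : ℕ) :
    Summable (fun k : ℕ => C * (k : ℝ) ^ n * t ^ k) := by
  have h := summable_pow_mul_geometric_of_norm_lt_one (R := ℝ) n
    (r := t) (by rwa [Real.norm_eq_abs, abs_of_nonneg ht0])
  simpa [mul_assoc] using h.mul_left C

end

section main
variable {A : ℕ → ℂ} {α : ℂ} {M q : ℝ}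

private lemma tlt {q : ℝ} (hq0 : 0 < q) (hq1 : q ≤ 1) {α : ℂ} (hre : α.re < 0)
    {z : ℝ} (hz : 0 < z) : 0 ≤ q * Real.exp (α.re * z) ∧ q * Real.exp (α.re * z) < 1 := by
  constructor
  · exact mul_nonneg hq0.le (Real.exp_pos _).le
  · have he : Real.exp (α.re * z) < 1 := by
      rw [Real.exp_lt_one_iff]
      exact mul_neg_of_neg_of_pos hre hz
    nlinarith [Real.exp_pos (α.re * z)]

private lemma summable_pt_norm (hM : 0 ≤ M) (hq0 : 0 < q) (hq1 : q ≤ 1) (hre : α.re < 0)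
    (hbound : ∀ k : ℕ, 1 ≤ k → ‖A k‖ ≤ M * q ^ k)
    (n : ℕ) {z : ℝ} (hz : 0 < z) : Summable (fun k => ‖pt A α n k z‖) := by
  obtain ⟨ht0, ht1⟩ := tlt hq0 hq1 hre hz
  exact Summable.of_nonneg_of_le (fun _ => norm_nonneg _)
    (fun k => pt_norm_le hM hq0.le hbound n k z) (summable_aux ht0 ht1 _ n)

private lemma pt_hasDerivAt (A : ℕ → ℂ) (α : ℂ) (n k : ℕ) (y : ℝ) :
    HasDerivAt (fun z => pt A α n k z) (pt A α (n + 1) k y) y := by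
  have h0 : HasDerivAt (fun w : ℂ => Complex.exp ((k : ℂ) * α * w))
      (Complex.exp ((k : ℂ) * α * (y : ℂ)) * ((k : ℂ) * α)) (y : ℂ) := by
    simpa [Function.comp_def] using (Complex.hasDerivAt_exp ((k : ℂ) * α * (y : ℂ))).comp (y : ℂ)
      ((hasDerivAt_id ((y : ℝ) : ℂ)).const_mul ((k : ℂ) * α))
  have h1 : HasDerivAt (fun z : ℝ => Complex.exp ((k : ℂ) * α * z))
      (Complex.exp ((k : ℂ) * α * (y : ℂ)) * ((k : ℂ) * α)) y := h0.comp_ofReal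
  have h2 := h1.const_mul (tA A k * ((k : ℂ) * α) ^ n)
  convert h2 using 1
  · rfl
  · rfl
  simp only [pt, pow_succ]
  ring

private lemma Ss_hasDerivAt (hM : 0 ≤ M) (hq0 : 0 < q) (hq1 : q ≤ 1) (hre : α.re < 0)
    (hbound : ∀ k : ℕ, 1 ≤ k → ‖A k‖ ≤ M * q ^ k)
    (n : ℕ) {z₀ : ℝ} (hz : 0 < z₀) :
    HasDerivAt (Ss A α n) (Ss A α (n + 1) z₀) z₀ := by
  have h2 : (0 : ℝ) < z₀ / 2 := by linarith
  obtain ⟨ht0, ht1⟩ := tlt hq0 hq1 hre h2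
  have key := hasDerivAt_tsum_of_isPreconnected
    (u := fun k : ℕ => M * ‖α‖ ^ (n + 1) * (k : ℝ) ^ (n + 1) * (q * Real.exp (α.re * (z₀ / 2))) ^ k)
    (g := fun k z => pt A α n k z) (g' := fun k z => pt A α (n + 1) k z)
    (t := Set.Ioi (z₀ / 2)) (y₀ := z₀) (y := z₀)
    (summable_aux ht0 ht1 _ _) isOpen_Ioi isPreconnected_Ioi
    (fun k y _ => pt_hasDerivAt A α n k y)
    (fun k y hy => ?_) (Set.mem_Ioi.2 (by linarith)) ?_ (Set.mem_Ioi.2 (by linarith))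
  · exact key
  · refine le_trans (pt_norm_le hM hq0.le hbound (n + 1) k y) ?_
    have hy' : z₀ / 2 ≤ y := le_of_lt hy
    have : q * Real.exp (α.re * y) ≤ q * Real.exp (α.re * (z₀ / 2)) := by
      have : α.re * y ≤ α.re * (z₀ / 2) := by nlinarith
      exact mul_le_mul_of_nonneg_left (Real.exp_le_exp.2 this) hq0.le
    have hnn : (0:ℝ) ≤ q * Real.exp (α.re * y) := mul_nonneg hq0.le (Real.exp_pos _).le
    have hpow : (q * Real.exp (α.re * y)) ^ k ≤ (q * Real.exp (α.re * (z₀ / 2))) ^ k :=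
      pow_le_pow_left₀ hnn this k
    have hC : (0:ℝ) ≤ M * ‖α‖ ^ (n + 1) * (k : ℝ) ^ (n + 1) :=
      mul_nonneg (mul_nonneg hM (pow_nonneg (norm_nonneg _) _)) (pow_nonneg (Nat.cast_nonneg _) _)
    exact mul_le_mul_of_nonneg_left hpow hC
  · exact ((summable_pt_norm hM hq0 hq1 hre hbound n hz).of_norm)

end main


private lemma coeff_key (a b c d g h : ℝ) (α : ℂ)
    (hroot : α ^ 4 - (b : ℂ) * α ^ 2 + (a : ℂ) = 0)
    (A : ℕ → ℂ) (hrec : ReversibleRec a b c d g h α A) (W : ℂ)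
    (P : ℕ → ℕ → ℂ) (hP : ∀ n k, P n k = tA A k * ((k : ℂ) * α) ^ n * W ^ k) (m : ℕ) :
    P 4 m - (b : ℂ) * P 2 m + (a : ℂ) * P 0 m =
      (c : ℂ) * ∑ kl ∈ Finset.HasAntidiagonal.antidiagonal m, P 0 kl.1 * P 2 kl.2
      + (d : ℂ) * ∑ kl ∈ Finset.HasAntidiagonal.antidiagonal m, P 1 kl.1 * P 1 kl.2
      + (g : ℂ) * ∑ kl ∈ Finset.HasAntidiagonal.antidiagonal m, P 0 kl.1 * P 0 kl.2
      + (h : ℂ) * ∑ kl ∈ Finset.HasAntidiagonal.antidiagonal m, P 0 kl.1 *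
          (∑ kl' ∈ Finset.HasAntidiagonal.antidiagonal kl.2, P 0 kl'.1 * P 0 kl'.2) := by
  have hP0 : ∀ n, P n 0 = 0 := by intro n; simp [hP, tA]
  rcases Nat.eq_zero_or_pos m with rfl | hm
  · simp [Finset.Nat.antidiagonal_zero, hP0]
  have hm0 : m ≠ 0 := by omega
  -- rewrite the antidiagonal sums as Ico sums
  rw [antidiag_to_Ico m (fun x y => P 0 x * P 2 y) (fun j => by simp [hP0])
      (fun i => by simp [hP0]),
    antidiag_to_Ico m (fun x y => P 1 x * P 1 y) (fun j => by simp [hP0])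
      (fun i => by simp [hP0]),
    antidiag_to_Ico m (fun x y => P 0 x * P 0 y) (fun j => by simp [hP0])
      (fun i => by simp [hP0]),
    antidiag_to_Ico' m
      (fun x y => P 0 x * (∑ kl' ∈ Finset.HasAntidiagonal.antidiagonal y, P 0 kl'.1 * P 0 kl'.2))
      (fun j => by simp [hP0])
      (fun i => by simp [Finset.Nat.antidiagonal_zero, hP0])]
  -- shrink the cubic outer sum from `Ico 1 m` to `Ico 2 m`
  have hshrink : ∑ j ∈ Finset.Ico 1 m,
        P 0 (m - j) * (∑ kl' ∈ Finset.HasAntidiagonal.antidiagonal j, P 0 kl'.1 * P 0 kl'.2)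
      = ∑ j ∈ Finset.Ico 2 m,
        P 0 (m - j) * (∑ kl' ∈ Finset.HasAntidiagonal.antidiagonal j, P 0 kl'.1 * P 0 kl'.2) := by
    refine (Finset.sum_subset (Finset.Ico_subset_Ico (by omega) le_rfl) ?_).symm
    intro x hx hnx
    simp only [Finset.mem_Ico] at hx hnx
    have hx1 : x = 1 := by omega
    subst hx1
    have : ∑ kl' ∈ Finset.HasAntidiagonal.antidiagonal 1, P 0 kl'.1 * P 0 kl'.2 = 0 := by
      rw [antidiag_to_Ico 1 (fun x y => P 0 x * P 0 y) (fun j => by simp [hP0])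
        (fun i => by simp [hP0])]
      simp
    rw [this, mul_zero]
  rw [hshrink]
  -- rewrite the inner antidiagonal sums
  have hinner : ∀ j ∈ Finset.Ico 2 m,
      P 0 (m - j) * (∑ kl' ∈ Finset.HasAntidiagonal.antidiagonal j, P 0 kl'.1 * P 0 kl'.2)
      = P 0 (m - j) * (∑ l ∈ Finset.Ico 1 j, P 0 l * P 0 (j - l)) := by
    intro j _
    rw [antidiag_to_Ico j (fun x y => P 0 x * P 0 y) (fun j' => by simp [hP0])
      (fun i => by simp [hP0])]
  rw [Finset.sum_congr rfl hinner]
  -- main calculation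
  calc P 4 m - (b : ℂ) * P 2 m + (a : ℂ) * P 0 m
      = ((((m : ℂ) * α) ^ 4 - (b : ℂ) * ((m : ℂ) * α) ^ 2 + (a : ℂ)) * A m) * W ^ m := by
        simp only [hP, tA]
        rw [if_neg hm0]
        ring
    _ = ((∑ i ∈ Finset.Ico 1 m,
            ((c : ℂ) * ((m - i : ℕ) : ℂ) ^ 2 * α ^ 2
              + (d : ℂ) * (i : ℂ) * ((m - i : ℕ) : ℂ) * α ^ 2 + (g : ℂ))
              * A (m - i) * A i)
          + (h : ℂ) * ∑ j ∈ Finset.Ico 2 m, ∑ l ∈ Finset.Ico 1 j,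
              A (m - j) * A (j - l) * A l) * W ^ m := by
        rcases eq_or_lt_of_le (Nat.succ_le_of_lt hm) with hm1 | hm2
        · -- m = 1
          have hm1' : m = 1 := hm1.symm
          subst hm1'
          rw [show ((1 : ℕ) : ℂ) = 1 by norm_num, one_mul, hroot, zero_mul, zero_mul]
          rw [Finset.Ico_self, Finset.Ico_eq_empty (by omega)]
          simp
        · rw [hrec m hm2]
    _ = (c : ℂ) * (∑ i ∈ Finset.Ico 1 m, P 0 i * P 2 (m - i))
        + (d : ℂ) * (∑ i ∈ Finset.Ico 1 m, P 1 i * P 1 (m - i))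
        + (g : ℂ) * (∑ i ∈ Finset.Ico 1 m, P 0 i * P 0 (m - i))
        + (h : ℂ) * ∑ j ∈ Finset.Ico 2 m,
            P 0 (m - j) * (∑ l ∈ Finset.Ico 1 j, P 0 l * P 0 (j - l)) := by
        have quad : ∀ i ∈ Finset.Ico 1 m,
            ((c : ℂ) * ((m - i : ℕ) : ℂ) ^ 2 * α ^ 2
              + (d : ℂ) * (i : ℂ) * ((m - i : ℕ) : ℂ) * α ^ 2 + (g : ℂ))
              * A (m - i) * A i * W ^ m
            = (c : ℂ) * (P 0 i * P 2 (m - i)) + (d : ℂ) * (P 1 i * P 1 (m - i))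
              + (g : ℂ) * (P 0 i * P 0 (m - i)) := by
          intro i hi
          simp only [Finset.mem_Ico] at hi
          have hi0 : i ≠ 0 := by omega
          have hmi0 : m - i ≠ 0 := by omega
          have hW : W ^ i * W ^ (m - i) = W ^ m := by
            rw [← pow_add]; congr 1; omega
          simp only [hP, tA]
          rw [if_neg hi0, if_neg hmi0, ← hW]
          ring
        have cube : ∀ j ∈ Finset.Ico 2 m,
            (∑ l ∈ Finset.Ico 1 j, A (m - j) * A (j - l) * A l) * W ^ m
            = P 0 (m - j) * (∑ l ∈ Finset.Ico 1 j, P 0 l * P 0 (j - l)) := by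
          intro j hj
          simp only [Finset.mem_Ico] at hj
          rw [Finset.sum_mul, Finset.mul_sum]
          refine Finset.sum_congr rfl (fun l hl => ?_)
          simp only [Finset.mem_Ico] at hl
          have h1 : m - j ≠ 0 := by omega
          have h2 : l ≠ 0 := by omega
          have h3 : j - l ≠ 0 := by omega
          have hW : W ^ (m - j) * (W ^ l * W ^ (j - l)) = W ^ m := by
            rw [← pow_add, ← pow_add]; congr 1; omega
          simp only [hP, tA]
          rw [if_neg h1, if_neg h2, if_neg h3, ← hW]
          ring
        calc ((∑ i ∈ Finset.Ico 1 m,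
            ((c : ℂ) * ((m - i : ℕ) : ℂ) ^ 2 * α ^ 2
              + (d : ℂ) * (i : ℂ) * ((m - i : ℕ) : ℂ) * α ^ 2 + (g : ℂ))
              * A (m - i) * A i)
          + (h : ℂ) * ∑ j ∈ Finset.Ico 2 m, ∑ l ∈ Finset.Ico 1 j,
              A (m - j) * A (j - l) * A l) * W ^ m
            = (∑ i ∈ Finset.Ico 1 m,
                ((c : ℂ) * ((m - i : ℕ) : ℂ) ^ 2 * α ^ 2
                  + (d : ℂ) * (i : ℂ) * ((m - i : ℕ) : ℂ) * α ^ 2 + (g : ℂ))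
                  * A (m - i) * A i * W ^ m)
              + (h : ℂ) * ∑ j ∈ Finset.Ico 2 m,
                  (∑ l ∈ Finset.Ico 1 j, A (m - j) * A (j - l) * A l) * W ^ m := by
              rw [add_mul, mul_assoc ((h : ℝ) : ℂ), Finset.sum_mul, Finset.sum_mul]
          _ = (∑ i ∈ Finset.Ico 1 m,
                ((c : ℂ) * (P 0 i * P 2 (m - i)) + (d : ℂ) * (P 1 i * P 1 (m - i))
                  + (g : ℂ) * (P 0 i * P 0 (m - i))))
              + (h : ℂ) * ∑ j ∈ Finset.Ico 2 m,
                  P 0 (m - j) * (∑ l ∈ Finset.Ico 1 j, P 0 l * P 0 (j - l)) := by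
              rw [Finset.sum_congr rfl quad, Finset.sum_congr rfl cube]
          _ = _ := by
              rw [Finset.sum_add_distrib, Finset.sum_add_distrib,
                ← Finset.mul_sum, ← Finset.mul_sum, ← Finset.mul_sum]

section part4
variable {A : ℕ → ℂ} {α : ℂ} {M q : ℝ}

private lemma pt_norm_eq (A : ℕ → ℂ) (α : ℂ) (n : ℕ) {k : ℕ} (hk : k ≠ 0) (z : ℝ) :
    ‖pt A α n k z‖ = ‖A k‖ * ((k : ℝ) * ‖α‖) ^ n * Real.exp ((k : ℝ) * (α.re * z)) := by
  rw [pt, tA, if_neg hk]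
  rw [norm_mul, norm_mul, norm_pow, norm_mul, Complex.norm_natCast,
    Complex.norm_exp, re_aux]

private lemma Ss_ODE (a b c d g h : ℝ) (hre : α.re < 0)
    (hroot : α ^ 4 - (b : ℂ) * α ^ 2 + (a : ℂ) = 0)
    (hrec : ReversibleRec a b c d g h α A)
    (hM : 0 ≤ M) (hq0 : 0 < q) (hq1 : q ≤ 1)
    (hbound : ∀ k : ℕ, 1 ≤ k → ‖A k‖ ≤ M * q ^ k)
    {z : ℝ} (hz : 0 < z) :
    Ss A α 4 z - (b : ℂ) * Ss A α 2 z + (a : ℂ) * Ss A α 0 z =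
      (c : ℂ) * Ss A α 0 z * Ss A α 2 z + (d : ℂ) * (Ss A α 1 z) ^ 2
        + (g : ℂ) * (Ss A α 0 z) ^ 2 + (h : ℂ) * (Ss A α 0 z) ^ 3 := by
  set W : ℂ := Complex.exp (α * z) with hWdef
  set P : ℕ → ℕ → ℂ := fun n k => tA A k * ((k : ℂ) * α) ^ n * W ^ k with hPdef
  have hpt : ∀ n k, pt A α n k z = P n k := by
    intro n k
    rw [hPdef]
    simp only []
    rw [pt, hWdef, show (k : ℂ) * α * (z : ℂ) = (k : ℂ) * (α * (z : ℂ)) from mul_assoc _ _ _,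
      Complex.exp_nat_mul]
  have snP : ∀ n, Summable (fun k => ‖P n k‖) := fun n =>
    ((summable_pt_norm hM hq0 hq1 hre hbound n hz).congr (fun k => by rw [hpt]))
  have sP : ∀ n, Summable (fun k => P n k) := fun n => (snP n).of_norm
  have hSs : ∀ n, Ss A α n z = ∑' k, P n k := fun n => tsum_congr (fun k => hpt n k)
  have snQg : Summable (fun m => ‖∑ kl ∈ Finset.HasAntidiagonal.antidiagonal m, P 0 kl.1 * P 0 kl.2‖) :=
    summable_norm_sum_mul_antidiagonal_of_summable_norm (snP 0) (snP 0)
  have hQc : (∑' k, P 0 k) * (∑' k, P 2 k)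
      = ∑' m, ∑ kl ∈ Finset.HasAntidiagonal.antidiagonal m, P 0 kl.1 * P 2 kl.2 :=
    tsum_mul_tsum_eq_tsum_sum_antidiagonal_of_summable_norm (snP 0) (snP 2)
  have hQd : (∑' k, P 1 k) * (∑' k, P 1 k)
      = ∑' m, ∑ kl ∈ Finset.HasAntidiagonal.antidiagonal m, P 1 kl.1 * P 1 kl.2 :=
    tsum_mul_tsum_eq_tsum_sum_antidiagonal_of_summable_norm (snP 1) (snP 1)
  have hQg : (∑' k, P 0 k) * (∑' k, P 0 k)
      = ∑' m, ∑ kl ∈ Finset.HasAntidiagonal.antidiagonal m, P 0 kl.1 * P 0 kl.2 :=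
    tsum_mul_tsum_eq_tsum_sum_antidiagonal_of_summable_norm (snP 0) (snP 0)
  have hQh : (∑' k, P 0 k) * (∑' m, ∑ kl ∈ Finset.HasAntidiagonal.antidiagonal m, P 0 kl.1 * P 0 kl.2)
      = ∑' m, ∑ kl ∈ Finset.HasAntidiagonal.antidiagonal m, P 0 kl.1 *
          (∑ kl' ∈ Finset.HasAntidiagonal.antidiagonal kl.2, P 0 kl'.1 * P 0 kl'.2) := by
    have := tsum_mul_tsum_eq_tsum_sum_antidiagonal_of_summable_norm (snP 0) snQg
    convert this using 2
  have SQc : Summable (fun m => ∑ kl ∈ Finset.HasAntidiagonal.antidiagonal m, P 0 kl.1 * P 2 kl.2) :=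
    (summable_norm_sum_mul_antidiagonal_of_summable_norm (snP 0) (snP 2)).of_norm
  have SQd : Summable (fun m => ∑ kl ∈ Finset.HasAntidiagonal.antidiagonal m, P 1 kl.1 * P 1 kl.2) :=
    (summable_norm_sum_mul_antidiagonal_of_summable_norm (snP 1) (snP 1)).of_norm
  have SQg : Summable (fun m => ∑ kl ∈ Finset.HasAntidiagonal.antidiagonal m, P 0 kl.1 * P 0 kl.2) :=
    snQg.of_norm
  have SQh : Summable (fun m => ∑ kl ∈ Finset.HasAntidiagonal.antidiagonal m, P 0 kl.1 *
      (∑ kl' ∈ Finset.HasAntidiagonal.antidiagonal kl.2, P 0 kl'.1 * P 0 kl'.2)) := by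
    have := (summable_norm_sum_mul_antidiagonal_of_summable_norm (snP 0) snQg).of_norm
    exact this
  calc Ss A α 4 z - (b : ℂ) * Ss A α 2 z + (a : ℂ) * Ss A α 0 z
      = ∑' k, (P 4 k - (b : ℂ) * P 2 k + (a : ℂ) * P 0 k) := by
        rw [hSs 4, hSs 2, hSs 0,
          Summable.tsum_add ((sP 4).sub ((sP 2).mul_left _)) ((sP 0).mul_left _),
          Summable.tsum_sub (sP 4) ((sP 2).mul_left _), tsum_mul_left, tsum_mul_left]
    _ = ∑' m, ((c : ℂ) * ∑ kl ∈ Finset.HasAntidiagonal.antidiagonal m, P 0 kl.1 * P 2 kl.2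
          + (d : ℂ) * ∑ kl ∈ Finset.HasAntidiagonal.antidiagonal m, P 1 kl.1 * P 1 kl.2
          + (g : ℂ) * ∑ kl ∈ Finset.HasAntidiagonal.antidiagonal m, P 0 kl.1 * P 0 kl.2
          + (h : ℂ) * ∑ kl ∈ Finset.HasAntidiagonal.antidiagonal m, P 0 kl.1 *
              (∑ kl' ∈ Finset.HasAntidiagonal.antidiagonal kl.2, P 0 kl'.1 * P 0 kl'.2)) :=
        tsum_congr (coeff_key a b c d g h α hroot A hrec W P (fun n k => rfl))
    _ = (c : ℂ) * Ss A α 0 z * Ss A α 2 z + (d : ℂ) * (Ss A α 1 z) ^ 2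
        + (g : ℂ) * (Ss A α 0 z) ^ 2 + (h : ℂ) * (Ss A α 0 z) ^ 3 := by
        rw [Summable.tsum_add (((SQc.mul_left _).add (SQd.mul_left _)).add (SQg.mul_left _))
            (SQh.mul_left _),
          Summable.tsum_add ((SQc.mul_left _).add (SQd.mul_left _)) (SQg.mul_left _),
          Summable.tsum_add (SQc.mul_left _) (SQd.mul_left _),
          tsum_mul_left, tsum_mul_left, tsum_mul_left, tsum_mul_left,
          ← hQc, ← hQd, ← hQh, ← hQg, hSs 0, hSs 1, hSs 2]
        ring

private lemma Ss_tendsto (hre : α.re < 0) (hM : 0 ≤ M) (hq0 : 0 < q) (hq1 : q ≤ 1)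
    (hbound : ∀ k : ℕ, 1 ≤ k → ‖A k‖ ≤ M * q ^ k) (n : ℕ) :
    Tendsto (Ss A α n) atTop (nhds 0) := by
  set s : ℝ := q * Real.exp (α.re * 1) with hs
  obtain ⟨hs0, hs1⟩ := tlt hq0 hq1 hre one_pos (z := 1)
  set C : ℝ := ∑' k : ℕ, M * ‖α‖ ^ n * (k : ℝ) ^ n * s ^ k with hC
  have hb : ∀ z : ℝ, 1 ≤ z → ‖Ss A α n z‖ ≤ C * Real.exp (α.re * (z - 1)) := by
    intro z hz1
    have hz0 : (0 : ℝ) < z := by linarith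
    have bound : ∀ k : ℕ, ‖pt A α n k z‖
        ≤ (M * ‖α‖ ^ n * (k : ℝ) ^ n * s ^ k) * Real.exp (α.re * (z - 1)) := by
      intro k
      rcases Nat.eq_zero_or_pos k with rfl | hk
      · have hz' : pt A α n 0 z = 0 := by simp [pt, tA]
        rw [hz', norm_zero]
        have : (0:ℝ) ≤ M * ‖α‖ ^ n * ((0:ℕ) : ℝ) ^ n * s ^ 0 :=
          mul_nonneg (mul_nonneg (mul_nonneg hM (pow_nonneg (norm_nonneg _) _))
            (pow_nonneg (Nat.cast_nonneg _) _)) (pow_nonneg hs0 _)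
        exact mul_nonneg this (Real.exp_pos _).le
      · have hk0 : k ≠ 0 := by omega
        rw [pt_norm_eq A α n hk0 z]
        have hexp : Real.exp ((k : ℝ) * (α.re * z))
            ≤ Real.exp (α.re * (z - 1)) * Real.exp ((k : ℝ) * α.re) := by
          rw [← Real.exp_add]
          apply Real.exp_le_exp.2
          have h1 : (k : ℝ) * (α.re * (z - 1)) ≤ α.re * (z - 1) := by
            have ht : α.re * (z - 1) ≤ 0 := mul_nonpos_of_nonpos_of_nonneg hre.le (by linarith)
            have hk1 : (1 : ℝ) ≤ (k : ℝ) := by exact_mod_cast hk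
            nlinarith
          nlinarith [h1]
        calc ‖A k‖ * ((k : ℝ) * ‖α‖) ^ n * Real.exp ((k : ℝ) * (α.re * z))
            ≤ (M * q ^ k) * ((k : ℝ) * ‖α‖) ^ n * Real.exp ((k : ℝ) * (α.re * z)) := by
              gcongr
              exact hbound k hk
          _ ≤ (M * q ^ k) * ((k : ℝ) * ‖α‖) ^ n
              * (Real.exp (α.re * (z - 1)) * Real.exp ((k : ℝ) * α.re)) := by
              have hnn : (0:ℝ) ≤ (M * q ^ k) * ((k : ℝ) * ‖α‖) ^ n :=
                mul_nonneg (mul_nonneg hM (pow_nonneg hq0.le _))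
                  (pow_nonneg (mul_nonneg (Nat.cast_nonneg _) (norm_nonneg _)) _)
              exact mul_le_mul_of_nonneg_left hexp hnn
          _ = (M * ‖α‖ ^ n * (k : ℝ) ^ n * s ^ k) * Real.exp (α.re * (z - 1)) := by
              rw [hs, mul_pow, mul_pow, ← Real.exp_nat_mul]
              ring_nf
    have hsum1 : Summable (fun k => ‖pt A α n k z‖) :=
      summable_pt_norm hM hq0 hq1 hre hbound n hz0
    have hsum2 : Summable (fun k : ℕ =>
        (M * ‖α‖ ^ n * (k : ℝ) ^ n * s ^ k) * Real.exp (α.re * (z - 1))) :=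
      (summable_aux hs0 hs1 _ n).mul_right _
    calc ‖Ss A α n z‖ ≤ ∑' k, ‖pt A α n k z‖ := norm_tsum_le_tsum_norm hsum1
      _ ≤ ∑' k : ℕ, (M * ‖α‖ ^ n * (k : ℝ) ^ n * s ^ k) * Real.exp (α.re * (z - 1)) :=
          Summable.tsum_le_tsum bound hsum1 hsum2
      _ = C * Real.exp (α.re * (z - 1)) := tsum_mul_right
  have hten : Tendsto (fun z : ℝ => C * Real.exp (α.re * (z - 1))) atTop (nhds 0) := by
    have h1 : Tendsto (fun z : ℝ => z - 1) atTop atTop :=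
      tendsto_atTop_add_const_right atTop (-1) tendsto_id
    have h2 : Tendsto (fun z : ℝ => α.re * (z - 1)) atTop atBot := by
      have := Tendsto.const_mul_atTop_of_neg hre h1
      exact this
    have h3 : Tendsto (fun z : ℝ => Real.exp (α.re * (z - 1))) atTop (nhds 0) :=
      Real.tendsto_exp_atBot.comp h2
    simpa using h3.const_mul C
  refine squeeze_zero_norm' ?_ hten
  filter_upwards [eventually_ge_atTop (1 : ℝ)] with z hz using hb z hz

end part4


/-- Main theorem, reversible case: if `Re α < 0`, `α⁴ − bα² + a = 0`, the
coefficients `(a_k)` satisfy the reversible recursion with parameter `α` and the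
geometric bound `|a_k| ≤ M q^k` (`M ≥ 0`, `0 < q ≤ 1`), then
`u(z) = Σ_{k=1}^∞ a_k e^{kαz}` is infinitely differentiable on `(0, ∞)`,
satisfies `u'''' − b u'' + a u = c u u'' + d(u')² + g u² + h u³` there, and
`u, u', u'', u'''` all tend to `0` as `z → +∞`. -/
theorem reversible_series_is_homoclinic_solution (a b c d g h : ℝ) (α : ℂ)
    (hre : α.re < 0) (hroot : α ^ 4 - (b : ℂ) * α ^ 2 + (a : ℂ) = 0)
    (A : ℕ → ℂ) (hrec : ReversibleRec a b c d g h α A)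
    (M q : ℝ) (hM : 0 ≤ M) (hq0 : 0 < q) (hq1 : q ≤ 1)
    (hbound : ∀ k : ℕ, 1 ≤ k → ‖A k‖ ≤ M * q ^ k)
    (u : ℝ → ℂ)
    (hu : ∀ z : ℝ, u z =
      ∑' k : ℕ, A (k + 1) * Complex.exp ((((k : ℕ) : ℂ) + 1) * α * (z : ℂ))) :
    ContDiffOn ℝ (⊤ : ℕ∞) u (Set.Ioi 0) ∧
    (∀ z ∈ Set.Ioi (0 : ℝ),
      iteratedDeriv 4 u z - (b : ℂ) * iteratedDeriv 2 u z + (a : ℂ) * u z =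
        (c : ℂ) * u z * iteratedDeriv 2 u z + (d : ℂ) * (iteratedDeriv 1 u z) ^ 2
          + (g : ℂ) * (u z) ^ 2 + (h : ℂ) * (u z) ^ 3) ∧
    (∀ n : ℕ, n ≤ 3 → Tendsto (iteratedDeriv n u) atTop (nhds 0)) := by
  -- identification of `u` with the series `Ss A α 0`
  have hu0 : ∀ z : ℝ, u z = Ss A α 0 z := by
    intro z
    rw [hu z, Ss]
    rw [← tsum_shift (g := fun k => pt A α 0 k z) (by simp [pt, tA])]
    refine tsum_congr fun k => ?_
    simp only [pt, tA, Nat.succ_ne_zero, if_false, pow_zero, mul_one]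
    push_cast
    ring_nf
  -- iterated derivatives of `u` on `(0, ∞)`
  have hiter : ∀ n : ℕ, ∀ z : ℝ, 0 < z → iteratedDeriv n u z = Ss A α n z := by
    intro n
    induction n with
    | zero => intro z _; simpa [iteratedDeriv_zero] using hu0 z
    | succ n ih =>
      intro z hz
      rw [iteratedDeriv_succ]
      have hev : iteratedDeriv n u =ᶠ[nhds z] Ss A α n := by
        filter_upwards [Ioi_mem_nhds hz] with y hy using ih y hy
      rw [hev.deriv_eq]
      exact (Ss_hasDerivAt hM hq0 hq1 hre hbound n hz).deriv
  refine ⟨?_, ?_, ?_⟩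
  · -- analyticity, hence `C^⊤` smoothness
    set p : FormalMultilinearSeries ℂ ℂ ℂ := FormalMultilinearSeries.ofScalars ℂ (tA A)
      with hpdef
    have hrad : (1 : ENNReal) ≤ p.radius := by
      have := FormalMultilinearSeries.le_radius_of_bound p M (r := 1) ?_
      · simpa using this
      · intro n
        rw [hpdef, FormalMultilinearSeries.ofScalars_norm]
        rcases Nat.eq_zero_or_pos n with rfl | hn
        · simpa [tA] using hM
        · have h1 : ‖tA A n‖ ≤ M * q ^ n := by
            rw [tA, if_neg (by omega)]
            exact hbound n hn
          have h2 : q ^ n ≤ 1 := pow_le_one₀ hq0.le hq1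
          have : ‖tA A n‖ ≤ M := le_trans h1 (by nlinarith)
          simpa using this
    have hball : HasFPowerSeriesOnBall p.sum p 0 p.radius :=
      p.hasFPowerSeriesOnBall (lt_of_lt_of_le (zero_lt_one : (0:ENNReal) < 1) hrad)
    have hsum_eq : ∀ t : ℝ, p.sum (Complex.exp (α * t)) = u t := by
      intro t
      rw [hu0 t, Ss, FormalMultilinearSeries.sum]
      refine tsum_congr fun k => ?_
      rw [hpdef, FormalMultilinearSeries.ofScalars_apply_eq, smul_eq_mul]
      rw [pt, pow_zero, mul_one,
        show (k : ℂ) * α * (t : ℂ) = (k : ℂ) * (α * (t : ℂ)) from mul_assoc _ _ _,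
        Complex.exp_nat_mul]
    refine AnalyticOnNhd.contDiffOn ?_ (uniqueDiffOn_Ioi 0)
    intro z hz
    have hz' : (0 : ℝ) < z := hz
    have hw : ‖Complex.exp (α * (z : ℂ))‖ < 1 := by
      rw [Complex.norm_exp, Real.exp_lt_one_iff]
      have : (α * (z : ℂ)).re = α.re * z := by simp [Complex.mul_re]
      rw [this]
      exact mul_neg_of_neg_of_pos hre hz'
    have hw' : ‖Complex.exp (α * (z : ℂ))‖₊ < 1 := by exact_mod_cast hw
    have hmem : Complex.exp (α * (z : ℂ)) ∈ EMetric.ball (0 : ℂ) p.radius := by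
      show edist _ _ < _
      rw [edist_eq_enorm_sub, sub_zero, enorm_eq_nnnorm]
      exact lt_of_lt_of_le (by exact_mod_cast hw') hrad
    have hA1 : AnalyticAt ℂ p.sum (Complex.exp (α * (z : ℂ))) :=
      hball.analyticAt_of_mem hmem
    have l1 : AnalyticAt ℝ (fun t : ℝ => ((t : ℂ))) z := Complex.ofRealCLM.analyticAt z
    have l2 : AnalyticAt ℝ (fun w : ℂ => α * w) ((z : ℝ) : ℂ) :=
      AnalyticAt.restrictScalars (𝕜' := ℂ) (analyticAt_const.mul analyticAt_id)
    have l3 : AnalyticAt ℝ (fun t : ℝ => α * (t : ℂ)) z := l2.comp l1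
    have l4 : AnalyticAt ℝ Complex.exp (α * ((z : ℝ) : ℂ)) := AnalyticAt.restrictScalars (𝕜' := ℂ) analyticAt_cexp
    have l5 : AnalyticAt ℝ (fun t : ℝ => Complex.exp (α * (t : ℂ))) z :=
      AnalyticAt.comp (g := Complex.exp) (f := fun t : ℝ => α * (t : ℂ)) l4 l3
    have hA2 : AnalyticAt ℝ (fun t : ℝ => p.sum (Complex.exp (α * (t : ℂ)))) z :=
      AnalyticAt.comp (g := p.sum) (f := fun t : ℝ => Complex.exp (α * (t : ℂ)))
        (AnalyticAt.restrictScalars (𝕜' := ℂ) hA1) l5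
    exact hA2.congr (Filter.EventuallyEq.of_eq (funext fun t => hsum_eq t))
  · -- the differential equation
    intro z hz
    have hz' : (0 : ℝ) < z := hz
    rw [hiter 4 z hz', hiter 2 z hz', hiter 1 z hz', hu0 z]
    exact Ss_ODE a b c d g h hre hroot hrec hM hq0 hq1 hbound hz'
  · -- decay at `+∞`
    intro n _
    refine Tendsto.congr' ?_ (Ss_tendsto hre hM hq0 hq1 hbound n)
    filter_upwards [eventually_gt_atTop (0 : ℝ)] with z hz using (hiter n z hz).symm
end

section
/- (Main theorem, non-reversible case: the series is a solution homoclinic to the origin.) Let a, b, c, d, g, h, p, q, r, s be real numbers, let α ∈ ℂ with Re α < 0 and α⁴ − bα² + a = 0, and let (a_k)_{k≥1} be a sequence of complex numbers satisfying the non-reversible recursion with parameter α. Assume the geometric bound |a_k| ≤ M q^k for all k ≥ 1, with M ≥ 0 and 0 < q ≤ 1. Then u(z) := Σ_{k=1}^∞ a_k e^{kαz} defines an infinitely differentiable ℂ-valued function on (0, ∞) which satisfies u'''' − b u'' + a u = c u u'' + d (u')² + g u² + h u³ + p u u''' + q u' u'' + r u u' + s u³ u' on (0, ∞), and u(z), u'(z),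 u''(z), u'''(z) all tend to 0 as z → +∞. -/
open Filter

/-- A sequence `(a_k)_{k≥1}` satisfies the non-reversible recursion with parameter
`α` if for every `k ≥ 2`:
`((kα)⁴ − b(kα)² + a)·a_k
  = Σ_{i=1}^{k−1} (p(k−i)³α³ + c(k−i)²α² + q·i(k−i)²α³ + d·i(k−i)α² + r(k−i)α + g)·a_{k−i} a_i
    + h·Σ_{j=2}^{k−1} Σ_{l=1}^{j−1} a_{k−j} a_{j−l} a_l
    + s·(kα/4)·Σ_{i+j+l+m=k, i,j,l,m ≥ 1} a_i a_j a_l a_m`. -/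
def NonReversibleRec (a b c d g h p q r s : ℝ) (α : ℂ) (A : ℕ → ℂ) : Prop :=
  ∀ k : ℕ, 2 ≤ k →
    (((k : ℂ) * α) ^ 4 - (b : ℂ) * ((k : ℂ) * α) ^ 2 + (a : ℂ)) * A k =
      (∑ i ∈ Finset.Ico 1 k,
        ((p : ℂ) * ((k - i : ℕ) : ℂ) ^ 3 * α ^ 3
          + (c : ℂ) * ((k - i : ℕ) : ℂ) ^ 2 * α ^ 2
          + (q : ℂ) * (i : ℂ) * ((k - i : ℕ) : ℂ) ^ 2 * α ^ 3
          + (d : ℂ) * (i : ℂ) * ((k - i : ℕ) : ℂ) * α ^ 2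
          + (r : ℂ) * ((k - i : ℕ) : ℂ) * α + (g : ℂ))
          * A (k - i) * A i)
      + (h : ℂ) * (∑ j ∈ Finset.Ico 2 k, ∑ l ∈ Finset.Ico 1 j,
          A (k - j) * A (j - l) * A l)
      + (s : ℂ) * ((k : ℂ) * α / 4) *
          (∑ i ∈ Finset.Ico 1 k, ∑ j ∈ Finset.Ico 1 (k - i),
            ∑ l ∈ Finset.Ico 1 (k - i - j),
              A i * A j * A l * A (k - i - j - l))

open Finset

noncomputable def NRE (A : ℕ → ℂ) (α : ℂ) (n : ℕ) (z : ℝ) : ℂ :=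
  ∑' k : ℕ, A (k + 1) * ((((k : ℕ) : ℂ) + 1) * α) ^ n
      * Complex.exp ((((k : ℕ) : ℂ) + 1) * α * (z : ℂ))

lemma NRterm_norm (A : ℕ → ℂ) (α : ℂ) (M Q : ℝ) (hM : 0 ≤ M) (hQ0 : 0 < Q) (hQ1 : Q ≤ 1)
    (hbound : ∀ k : ℕ, 1 ≤ k → ‖A k‖ ≤ M * Q ^ k) (n k : ℕ) (z : ℝ) :
    ‖A (k + 1) * ((((k : ℕ) : ℂ) + 1) * α) ^ n * Complex.exp ((((k : ℕ) : ℂ) + 1) * α * (z : ℂ))‖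
      ≤ M * (((k : ℝ) + 1) * ‖α‖) ^ n * Real.exp ((((k : ℝ) + 1) * z) * α.re) := by
  have hA : ‖A (k + 1)‖ ≤ M := by
    refine (hbound (k+1) (Nat.le_add_left 1 k)).trans ?_
    calc M * Q ^ (k+1) ≤ M * 1 := by
          refine mul_le_mul_of_nonneg_left ?_ hM
          exact pow_le_one₀ hQ0.le hQ1
      _ = M := mul_one M
  have hexp : ((((k : ℕ) : ℂ) + 1) * α * (z : ℂ)) = (((((k:ℝ)+1) * z : ℝ)) : ℂ) * α := by
    push_cast; ring
  have hnexp : ‖Complex.exp ((((k : ℕ) : ℂ) + 1) * α * (z : ℂ))‖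
      = Real.exp ((((k : ℝ) + 1) * z) * α.re) := by
    rw [hexp, Complex.norm_exp]
    congr 1
    rw [Complex.ofReal_mul, Complex.mul_re]
    simp
  have hnpow : ‖((((k : ℕ) : ℂ) + 1) * α) ^ n‖ = (((k : ℝ) + 1) * ‖α‖) ^ n := by
    rw [norm_pow]
    congr 1
    rw [norm_mul]
    congr 1
    rw [show (((k : ℕ) : ℂ) + 1) = (((k : ℝ) + 1 : ℝ) : ℂ) by push_cast; ring,
      Complex.norm_real, Real.norm_eq_abs, abs_of_nonneg (by positivity)]
  rw [norm_mul, norm_mul, hnexp, hnpow]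
  have h1 : (0:ℝ) ≤ (((k : ℝ) + 1) * ‖α‖) ^ n := by positivity
  have h2 : (0:ℝ) ≤ Real.exp ((((k : ℝ) + 1) * z) * α.re) := Real.exp_pos _ |>.le
  exact mul_le_mul_of_nonneg_right (mul_le_mul_of_nonneg_right hA h1) h2

lemma NRsummable_bound (α : ℂ) (hre : α.re < 0) (M : ℝ) (n : ℕ) {ε : ℝ} (hε : 0 < ε) :
    Summable (fun k : ℕ => M * (((k : ℝ) + 1) * ‖α‖) ^ n
      * Real.exp ((((k : ℝ) + 1) * ε) * α.re)) := by
  set ρ : ℝ := Real.exp (ε * α.re) with hρ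
  have hρ0 : 0 < ρ := Real.exp_pos _
  have hρ1 : ρ < 1 := by
    rw [hρ]
    apply Real.exp_lt_one_iff.2
    exact mul_neg_of_pos_of_neg hε hre
  have hs : Summable (fun k : ℕ => ((k : ℝ)) ^ n * ρ ^ k) := by
    apply summable_pow_mul_geometric_of_norm_lt_one
    rwa [Real.norm_eq_abs, abs_of_nonneg hρ0.le]
  have hs2 : Summable (fun k : ℕ => (((k:ℝ) + 1)) ^ n * ρ ^ (k + 1)) := by
    have := (summable_nat_add_iff 1).2 hs
    simpa using this
  have := (hs2.mul_left (M * ‖α‖ ^ n))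
  apply this.congr
  intro k
  rw [hρ, ← Real.exp_nat_mul]
  have : (((k : ℝ) + 1) * ε) * α.re = ((k+1 : ℕ) : ℝ) * (ε * α.re) := by push_cast; ring
  rw [this, mul_pow]
  ring

lemma NRterm_norm_le (A : ℕ → ℂ) (α : ℂ) (hre : α.re < 0) (M Q : ℝ) (hM : 0 ≤ M)
    (hQ0 : 0 < Q) (hQ1 : Q ≤ 1)
    (hbound : ∀ k : ℕ, 1 ≤ k → ‖A k‖ ≤ M * Q ^ k) (n k : ℕ) {ε z : ℝ}
    (hz : ε ≤ z) :
    ‖A (k + 1) * ((((k : ℕ) : ℂ) + 1) * α) ^ n * Complex.exp ((((k : ℕ) : ℂ) + 1) * α * (z : ℂ))‖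
      ≤ M * (((k : ℝ) + 1) * ‖α‖) ^ n * Real.exp ((((k : ℝ) + 1) * ε) * α.re) := by
  refine (NRterm_norm A α M Q hM hQ0 hQ1 hbound n k z).trans ?_
  have hk : (0:ℝ) ≤ (k:ℝ) := Nat.cast_nonneg k
  have : (((k : ℝ) + 1) * z) * α.re ≤ (((k : ℝ) + 1) * ε) * α.re := by
    nlinarith [mul_nonneg (by linarith : (0:ℝ) ≤ (k:ℝ)+1) (by linarith : (0:ℝ) ≤ z - ε)]
  have := Real.exp_le_exp.2 this
  have h1 : (0:ℝ) ≤ M * (((k : ℝ) + 1) * ‖α‖) ^ n := by positivity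
  exact mul_le_mul_of_nonneg_left this h1

lemma NRsummable_norm (A : ℕ → ℂ) (α : ℂ) (hre : α.re < 0) (M Q : ℝ) (hM : 0 ≤ M)
    (hQ0 : 0 < Q) (hQ1 : Q ≤ 1)
    (hbound : ∀ k : ℕ, 1 ≤ k → ‖A k‖ ≤ M * Q ^ k) (n : ℕ) {z : ℝ} (hz : 0 < z) :
    Summable (fun k : ℕ => ‖A (k + 1) * ((((k : ℕ) : ℂ) + 1) * α) ^ n
      * Complex.exp ((((k : ℕ) : ℂ) + 1) * α * (z : ℂ))‖) := by
  refine Summable.of_nonneg_of_le (fun k => norm_nonneg _)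
    (fun k => NRterm_norm_le A α hre M Q hM hQ0 hQ1 hbound n k (le_refl z))
    (NRsummable_bound α hre M n hz)

lemma NRsummable (A : ℕ → ℂ) (α : ℂ) (hre : α.re < 0) (M Q : ℝ) (hM : 0 ≤ M)
    (hQ0 : 0 < Q) (hQ1 : Q ≤ 1)
    (hbound : ∀ k : ℕ, 1 ≤ k → ‖A k‖ ≤ M * Q ^ k) (n : ℕ) {z : ℝ} (hz : 0 < z) :
    Summable (fun k : ℕ => A (k + 1) * ((((k : ℕ) : ℂ) + 1) * α) ^ n
      * Complex.exp ((((k : ℕ) : ℂ) + 1) * α * (z : ℂ))) :=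
  (NRsummable_norm A α hre M Q hM hQ0 hQ1 hbound n hz).of_norm

lemma NRhasDerivAt_term (A : ℕ → ℂ) (α : ℂ) (n k : ℕ) (z : ℝ) :
    HasDerivAt (fun z : ℝ => A (k + 1) * ((((k : ℕ) : ℂ) + 1) * α) ^ n
        * Complex.exp ((((k : ℕ) : ℂ) + 1) * α * (z : ℂ)))
      (A (k + 1) * ((((k : ℕ) : ℂ) + 1) * α) ^ (n + 1)
        * Complex.exp ((((k : ℕ) : ℂ) + 1) * α * (z : ℂ))) z := by
  set c : ℂ := (((k : ℕ) : ℂ) + 1) * α with hc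
  have h1 : HasDerivAt (fun w : ℂ => Complex.exp (c * w)) (Complex.exp (c * z) * c) z := by
    have h2 : HasDerivAt (fun w : ℂ => c * w) c (z : ℂ) := by
      simpa using (hasDerivAt_id (z : ℂ)).const_mul c
    exact (Complex.hasDerivAt_exp (c * z)).comp (z : ℂ) h2
  have h3 : HasDerivAt (fun z : ℝ => Complex.exp (c * z)) (Complex.exp (c * z) * c) z :=
    h1.comp_ofReal
  have h4 := h3.const_mul (A (k + 1) * c ^ n)
  have e : A (k + 1) * c ^ (n + 1) * Complex.exp (c * z) =
      A (k + 1) * c ^ n * (Complex.exp (c * z) * c) := by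
    rw [pow_succ]; ring
  rw [e]; exact h4

lemma NRhasDerivAt_E (A : ℕ → ℂ) (α : ℂ) (hre : α.re < 0) (M Q : ℝ) (hM : 0 ≤ M)
    (hQ0 : 0 < Q) (hQ1 : Q ≤ 1)
    (hbound : ∀ k : ℕ, 1 ≤ k → ‖A k‖ ≤ M * Q ^ k) (n : ℕ) {z : ℝ} (hz : 0 < z) :
    HasDerivAt (NRE A α n) (NRE A α (n + 1) z) z := by
  have hz2 : 0 < z / 2 := by linarith
  have hTU : TendstoUniformlyOn
      (fun (N : ℕ) (x : ℝ) => ∑ k ∈ range N, A (k + 1) * ((((k : ℕ) : ℂ) + 1) * α) ^ (n + 1)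
        * Complex.exp ((((k : ℕ) : ℂ) + 1) * α * (x : ℂ)))
      (NRE A α (n + 1)) atTop (Set.Ioi (z / 2)) := by
    exact tendstoUniformlyOn_tsum_nat (f := fun (k : ℕ) (x : ℝ) =>
        A (k + 1) * ((((k : ℕ) : ℂ) + 1) * α) ^ (n + 1)
          * Complex.exp ((((k : ℕ) : ℂ) + 1) * α * (x : ℂ)))
        (NRsummable_bound α hre M (n + 1) hz2)
        (s := Set.Ioi (z / 2)) (fun k x hx =>
          NRterm_norm_le A α hre M Q hM hQ0 hQ1 hbound (n + 1) k (le_of_lt hx))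
  have hfd : ∀ᶠ (N : ℕ) in atTop, ∀ x ∈ Set.Ioi (z / 2),
      HasDerivAt (fun x : ℝ => ∑ k ∈ range N, A (k + 1) * ((((k : ℕ) : ℂ) + 1) * α) ^ n
        * Complex.exp ((((k : ℕ) : ℂ) + 1) * α * (x : ℂ)))
      (∑ k ∈ range N, A (k + 1) * ((((k : ℕ) : ℂ) + 1) * α) ^ (n + 1)
        * Complex.exp ((((k : ℕ) : ℂ) + 1) * α * (x : ℂ))) x := by
    filter_upwards with N x hx
    exact HasDerivAt.fun_sum (fun k _ => NRhasDerivAt_term A α n k x)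
  have hpt : ∀ x ∈ Set.Ioi (z / 2),
      Tendsto (fun (N : ℕ) => ∑ k ∈ range N, A (k + 1) * ((((k : ℕ) : ℂ) + 1) * α) ^ n
        * Complex.exp ((((k : ℕ) : ℂ) + 1) * α * (x : ℂ))) atTop (nhds (NRE A α n x)) := by
    intro x hx
    exact ((NRsummable A α hre M Q hM hQ0 hQ1 hbound n (hz2.trans hx)).hasSum).tendsto_sum_nat
  exact hasDerivAt_of_tendstoUniformlyOn isOpen_Ioi hTU hfd hpt (Set.mem_Ioi.2 (by linarith))

lemma NRiter (A : ℕ → ℂ) (α : ℂ) (hre : α.re < 0) (M Q : ℝ) (hM : 0 ≤ M)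
    (hQ0 : 0 < Q) (hQ1 : Q ≤ 1)
    (hbound : ∀ k : ℕ, 1 ≤ k → ‖A k‖ ≤ M * Q ^ k) (u : ℝ → ℂ)
    (hu : ∀ z : ℝ, u z =
      ∑' k : ℕ, A (k + 1) * Complex.exp ((((k : ℕ) : ℂ) + 1) * α * (z : ℂ)))
    (n : ℕ) : Set.EqOn (iteratedDeriv n u) (NRE A α n) (Set.Ioi 0) := by
  induction n with
  | zero =>
    intro z _
    rw [iteratedDeriv_zero, hu z, NRE]
    exact tsum_congr (fun k => by rw [pow_zero, mul_one])
  | succ n ih =>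
    intro z hz
    rw [iteratedDeriv_succ]
    have hev : iteratedDeriv n u =ᶠ[nhds z] NRE A α n :=
      Filter.eventuallyEq_of_mem (isOpen_Ioi.mem_nhds hz) ih
    rw [hev.deriv_eq]
    exact (NRhasDerivAt_E A α hre M Q hM hQ0 hQ1 hbound n hz).deriv

lemma NRtendsto (A : ℕ → ℂ) (α : ℂ) (hre : α.re < 0) (M Q : ℝ) (hM : 0 ≤ M)
    (hQ0 : 0 < Q) (hQ1 : Q ≤ 1)
    (hbound : ∀ k : ℕ, 1 ≤ k → ‖A k‖ ≤ M * Q ^ k) (n : ℕ) :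
    Tendsto (NRE A α n) atTop (nhds 0) := by
  set g : ℕ → ℝ := fun k => M * (((k : ℝ) + 1) * ‖α‖) ^ n * Real.exp ((k : ℝ) * α.re)
    with hg
  have hρ1 : Real.exp α.re < 1 := Real.exp_lt_one_iff.2 hre
  have hρ0 : 0 < Real.exp α.re := Real.exp_pos _
  have hgs : Summable g := by
    have hs : Summable (fun k : ℕ => ((k : ℝ)) ^ n * Real.exp α.re ^ k) := by
      apply summable_pow_mul_geometric_of_norm_lt_one
      rwa [Real.norm_eq_abs, abs_of_nonneg hρ0.le]
    have hs2 : Summable (fun k : ℕ => (((k : ℝ) + 1)) ^ n * Real.exp α.re ^ (k + 1)) := by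
      have := (summable_nat_add_iff 1).2 hs
      simpa using this
    have hs3 : Summable (fun k : ℕ => (((k : ℝ) + 1)) ^ n * Real.exp α.re ^ k) :=
      (hs2.mul_left (Real.exp α.re)⁻¹).congr (fun k => by
        field_simp [pow_succ]; ring)
    apply ((hs3.mul_left (M * ‖α‖ ^ n))).congr
    intro k
    rw [hg, ← Real.exp_nat_mul]
    simp only [mul_pow, Real.exp_nat_mul]
    ring
  have key : ∀ z : ℝ, 1 ≤ z → ‖NRE A α n z‖ ≤ (∑' k, g k) * Real.exp (z * α.re) := by
    intro z hz
    have hz0 : (0:ℝ) < z := by linarith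
    have hterm : ∀ k : ℕ, ‖A (k + 1) * ((((k : ℕ) : ℂ) + 1) * α) ^ n
        * Complex.exp ((((k : ℕ) : ℂ) + 1) * α * (z : ℂ))‖ ≤ g k * Real.exp (z * α.re) := by
      intro k
      refine (NRterm_norm A α M Q hM hQ0 hQ1 hbound n k z).trans ?_
      rw [hg]
      have h1 : (((k : ℝ) + 1) * z) * α.re ≤ (k : ℝ) * α.re + z * α.re := by
        have hk : (0:ℝ) ≤ (k:ℝ) := Nat.cast_nonneg k
        nlinarith [mul_nonneg hk (by linarith : (0:ℝ) ≤ z - 1)]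
      calc M * (((k : ℝ) + 1) * ‖α‖) ^ n * Real.exp ((((k : ℝ) + 1) * z) * α.re)
          ≤ M * (((k : ℝ) + 1) * ‖α‖) ^ n * Real.exp ((k : ℝ) * α.re + z * α.re) := by
            refine mul_le_mul_of_nonneg_left (Real.exp_le_exp.2 h1) (by positivity)
        _ = M * (((k : ℝ) + 1) * ‖α‖) ^ n * Real.exp ((k : ℝ) * α.re)
            * Real.exp (z * α.re) := by rw [Real.exp_add]; ring
    refine (norm_tsum_le_tsum_norm ?_).trans ?_
    · exact NRsummable_norm A α hre M Q hM hQ0 hQ1 hbound n hz0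
    · rw [← tsum_mul_right]
      exact Summable.tsum_le_tsum hterm (NRsummable_norm A α hre M Q hM hQ0 hQ1 hbound n hz0)
        (hgs.mul_right _)
  have hto : Tendsto (fun z : ℝ => (∑' k, g k) * Real.exp (z * α.re)) atTop (nhds 0) := by
    have h1 : Tendsto (fun z : ℝ => z * α.re) atTop atBot :=
      Tendsto.atTop_mul_const_of_neg hre tendsto_id
    have h2 := (Real.tendsto_exp_atBot.comp h1).const_mul (∑' k, g k)
    simpa using h2
  refine squeeze_zero_norm' ?_ hto
  filter_upwards [eventually_ge_atTop (1:ℝ)] with z hz using key z hz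

noncomputable def NRB (A : ℕ → ℂ) : ℕ → ℂ := fun k => if k = 0 then 0 else A k

lemma NRB_norm_le (A : ℕ → ℂ) (M Q : ℝ) (hM : 0 ≤ M) (hQ0 : 0 < Q)
    (hbound : ∀ k : ℕ, 1 ≤ k → ‖A k‖ ≤ M * Q ^ k) (k : ℕ) :
    ‖NRB A k‖ ≤ M * Q ^ k := by
  rcases Nat.eq_zero_or_pos k with hk | hk
  · subst hk; simp [NRB]; positivity
  · rw [NRB]; simp only [Nat.pos_iff_ne_zero.1 hk, if_false]
    exact hbound k hk

lemma NRS_summable_norm (A : ℕ → ℂ) (α : ℂ) (M Q : ℝ) (hM : 0 ≤ M) (hQ0 : 0 < Q) (hQ1 : Q ≤ 1)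
    (hbound : ∀ k : ℕ, 1 ≤ k → ‖A k‖ ≤ M * Q ^ k) (n : ℕ) {w : ℂ}
    (hw : ‖w‖ < 1) :
    Summable (fun k : ℕ => ‖NRB A k * (((k : ℕ) : ℂ) * α) ^ n * w ^ k‖) := by
  have h0w : (0:ℝ) ≤ ‖w‖ := norm_nonneg w
  have hs : Summable (fun k : ℕ => ((k : ℝ)) ^ n * ‖w‖ ^ k) := by
    apply summable_pow_mul_geometric_of_norm_lt_one
    rwa [Real.norm_eq_abs, abs_of_nonneg h0w]
  refine Summable.of_nonneg_of_le (fun k => norm_nonneg _) ?_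
    ((hs.mul_left (M * ‖α‖ ^ n)))
  intro k
  rw [norm_mul, norm_mul, norm_pow, norm_pow]
  have h1 : ‖NRB A k‖ ≤ M := by
    refine (NRB_norm_le A M Q hM hQ0 hbound k).trans ?_
    calc M * Q ^ k ≤ M * 1 := mul_le_mul_of_nonneg_left (pow_le_one₀ hQ0.le hQ1) hM
      _ = M := mul_one M
  have h2 : ‖(((k : ℕ) : ℂ) * α)‖ = (k : ℝ) * ‖α‖ := by
    rw [norm_mul, Complex.norm_natCast]
  rw [h2]
  calc ‖NRB A k‖ * ((k : ℝ) * ‖α‖) ^ n * ‖w‖ ^ k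
      ≤ M * ((k : ℝ) * ‖α‖) ^ n * ‖w‖ ^ k := by
        refine mul_le_mul_of_nonneg_right (mul_le_mul_of_nonneg_right h1 (by positivity))
          (by positivity)
    _ = M * ‖α‖ ^ n * ((k : ℝ) ^ n * ‖w‖ ^ k) := by
        rw [mul_pow]; ring

lemma NRabs_exp_lt (α : ℂ) (hre : α.re < 0) {z : ℝ} (hz : 0 < z) :
    ‖Complex.exp (α * (z : ℂ))‖ < 1 := by
  rw [Complex.norm_exp]
  apply Real.exp_lt_one_iff.2
  have : (α * (z : ℂ)).re = α.re * z := by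
    rw [show (α * (z : ℂ)) = (((z : ℝ)) : ℂ) * α by ring, Complex.mul_re]
    simp [Complex.ofReal_re, Complex.ofReal_im]
    ring
  rw [this]
  exact mul_neg_of_neg_of_pos hre hz

lemma NRsum_eq (A : ℕ → ℂ) (α : ℂ) (hre : α.re < 0) (M Q : ℝ) (hM : 0 ≤ M) (hQ0 : 0 < Q)
    (hQ1 : Q ≤ 1) (hbound : ∀ k : ℕ, 1 ≤ k → ‖A k‖ ≤ M * Q ^ k)
    {z : ℝ} (hz : 0 < z) :
    (FormalMultilinearSeries.ofScalars ℂ (NRB A)).sum (Complex.exp (α * (z : ℂ))) =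
      ∑' k : ℕ, A (k + 1) * Complex.exp ((((k : ℕ) : ℂ) + 1) * α * (z : ℂ)) := by
  set w : ℂ := Complex.exp (α * (z : ℂ)) with hwdef
  have hw : ‖w‖ < 1 := NRabs_exp_lt α hre hz
  have h1 : (FormalMultilinearSeries.ofScalars ℂ (NRB A)).sum w = ∑' k : ℕ, NRB A k * w ^ k := by
    rw [FormalMultilinearSeries.sum]
    exact tsum_congr (fun k => by
      rw [FormalMultilinearSeries.ofScalars_apply_eq, smul_eq_mul])
  rw [h1]
  have hsum : Summable (fun k : ℕ => NRB A k * w ^ k) := by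
    have := NRS_summable_norm A α M Q hM hQ0 hQ1 hbound 0 hw
    simp only [pow_zero, mul_one] at this
    exact this.of_norm
  rw [Summable.tsum_eq_zero_add hsum]
  have h0 : NRB A 0 * w ^ 0 = 0 := by simp [NRB]
  rw [h0, zero_add]
  refine tsum_congr (fun k => ?_)
  have hB : NRB A (k + 1) = A (k + 1) := by simp [NRB]
  rw [hB, hwdef, ← Complex.exp_nat_mul]
  congr 1
  push_cast
  ring

lemma NRanalyticAt (A : ℕ → ℂ) (α : ℂ) (hre : α.re < 0) (M Q : ℝ) (hM : 0 ≤ M) (hQ0 : 0 < Q)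
    (hQ1 : Q ≤ 1) (hbound : ∀ k : ℕ, 1 ≤ k → ‖A k‖ ≤ M * Q ^ k)
    (u : ℝ → ℂ)
    (hu : ∀ z : ℝ, u z =
      ∑' k : ℕ, A (k + 1) * Complex.exp ((((k : ℕ) : ℂ) + 1) * α * (z : ℂ)))
    {z : ℝ} (hz : 0 < z) : AnalyticAt ℝ u z := by
  set p := FormalMultilinearSeries.ofScalars ℂ (NRB A) with hp
  have hrad : (1 : ENNReal) ≤ p.radius := by
    have : ((1 : NNReal) : ENNReal) ≤ p.radius := by
      apply p.le_radius_of_bound M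
      intro n
      rw [hp, FormalMultilinearSeries.ofScalars_norm]
      have : ‖NRB A n‖ ≤ M := by
        refine (NRB_norm_le A M Q hM hQ0 hbound n).trans ?_
        calc M * Q ^ n ≤ M * 1 := mul_le_mul_of_nonneg_left (pow_le_one₀ hQ0.le hQ1) hM
          _ = M := mul_one M
      simpa using this
    simpa using this
  have hrad0 : (0 : ENNReal) < p.radius := lt_of_lt_of_le (by norm_num) hrad
  have hball := p.hasFPowerSeriesOnBall hrad0
  set w : ℂ := Complex.exp (α * (z : ℂ)) with hwdef
  have hw : ‖w‖ < 1 := NRabs_exp_lt α hre hz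
  have hmem : w ∈ Metric.eball (0 : ℂ) p.radius := by
    rw [EMetric.mem_ball, edist_zero_right]
    refine lt_of_lt_of_le ?_ hrad
    rw [show ((1:ENNReal)) = ((1 : NNReal) : ENNReal) by norm_num]
    rw [enorm_eq_nnnorm, ENNReal.coe_lt_coe, ← NNReal.coe_lt_coe]
    simpa using hw
  have hFan : AnalyticAt ℂ p.sum w := hball.analyticAt_of_mem hmem
  have hFanR : AnalyticAt ℝ p.sum w := hFan.restrictScalars
  have hψ : AnalyticAt ℝ (fun t : ℝ => Complex.exp (α * ((t : ℝ) : ℂ))) z := by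
    have hg : AnalyticAt ℂ (fun w : ℂ => Complex.exp (α * w)) ((z : ℝ) : ℂ) := by
      exact (Complex.differentiable_exp.comp ((differentiable_id.const_mul α))).analyticAt _
    have hgR : AnalyticAt ℝ (fun w : ℂ => Complex.exp (α * w)) ((z : ℝ) : ℂ) :=
      hg.restrictScalars
    have hofReal : AnalyticAt ℝ (fun t : ℝ => ((t : ℝ) : ℂ)) z :=
      Complex.ofRealCLM.analyticAt z
    exact hgR.comp hofReal
  have hcomp : AnalyticAt ℝ (p.sum ∘ (fun t : ℝ => Complex.exp (α * ((t : ℝ) : ℂ)))) z :=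
    AnalyticAt.comp (g := p.sum) (f := fun t : ℝ => Complex.exp (α * ((t : ℝ) : ℂ))) hFanR hψ
  refine hcomp.congr ?_
  have hev : ∀ᶠ t in nhds z, t ∈ Set.Ioi (0:ℝ) := isOpen_Ioi.mem_nhds hz
  filter_upwards [hev] with t ht
  rw [Function.comp_apply, NRsum_eq A α hre M Q hM hQ0 hQ1 hbound ht, ← hu t]

open PowerSeries in
lemma NRcoeff_mul_Ico (φ ψ : PowerSeries ℂ) (h0φ : coeff 0 φ = 0) (h0ψ : coeff 0 ψ = 0)
    (k : ℕ) :
    coeff k (φ * ψ) = ∑ i ∈ Ico 1 k, coeff i φ * coeff (k - i) ψ := by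
  rw [coeff_mul, Finset.Nat.sum_antidiagonal_eq_sum_range_succ_mk]
  rcases Nat.eq_zero_or_pos k with hk | hk
  · subst hk; simp [h0φ]
  · obtain ⟨m, rfl⟩ : ∃ m, k = m + 1 := ⟨k - 1, (Nat.succ_pred_eq_of_pos hk).symm⟩
    rw [Finset.sum_range_succ]
    simp only [Nat.sub_self, h0ψ, mul_zero, add_zero]
    rw [Finset.sum_range_succ']
    simp only [h0φ, zero_mul, add_zero]
    rw [Finset.sum_Ico_eq_sum_range]
    apply Finset.sum_congr
    · congr 1
    · intro i _
      rw [add_comm 1 i]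

noncomputable def NRP (A : ℕ → ℂ) (α : ℂ) (n : ℕ) : PowerSeries ℂ :=
  PowerSeries.mk (fun k => NRB A k * (((k : ℕ) : ℂ) * α) ^ n)

lemma NRP_coeff (A : ℕ → ℂ) (α : ℂ) (n k : ℕ) :
    PowerSeries.coeff k (NRP A α n) = NRB A k * (((k : ℕ) : ℂ) * α) ^ n :=
  PowerSeries.coeff_mk k _

lemma NRP_coeff_zero (A : ℕ → ℂ) (α : ℂ) (n : ℕ) :
    PowerSeries.coeff 0 (NRP A α n) = 0 := by
  rw [NRP_coeff]; simp [NRB]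

open PowerSeries in
lemma NRtsum_mul (x : ℂ) (φ ψ : PowerSeries ℂ)
    (hφ : Summable (fun k : ℕ => ‖coeff k φ * x ^ k‖))
    (hψ : Summable (fun k : ℕ => ‖coeff k ψ * x ^ k‖)) :
    (∑' k : ℕ, coeff k φ * x ^ k) * (∑' k : ℕ, coeff k ψ * x ^ k) =
      ∑' k : ℕ, coeff k (φ * ψ) * x ^ k := by
  rw [tsum_mul_tsum_eq_tsum_sum_antidiagonal_of_summable_norm hφ hψ]
  refine tsum_congr (fun n => ?_)
  rw [coeff_mul, Finset.sum_mul]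
  refine Finset.sum_congr rfl (fun kl hkl => ?_)
  have := Finset.HasAntidiagonal.mem_antidiagonal.1 hkl
  rw [← this, pow_add]
  ring

open PowerSeries in
lemma NRsummable_mul (x : ℂ) (φ ψ : PowerSeries ℂ)
    (hφ : Summable (fun k : ℕ => ‖coeff k φ * x ^ k‖))
    (hψ : Summable (fun k : ℕ => ‖coeff k ψ * x ^ k‖)) :
    Summable (fun k : ℕ => ‖coeff k (φ * ψ) * x ^ k‖) := by
  have := summable_norm_sum_mul_antidiagonal_of_summable_norm hφ hψ
  refine this.congr (fun n => ?_)
  congr 1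
  rw [coeff_mul, Finset.sum_mul]
  refine Finset.sum_congr rfl (fun kl hkl => ?_)
  have := Finset.HasAntidiagonal.mem_antidiagonal.1 hkl
  rw [← this, pow_add]
  ring

open PowerSeries in
lemma NRcoeff_X_dX (F : PowerSeries ℂ) (k : ℕ) :
    coeff k (X * (d⁄dX ℂ F)) = (k : ℂ) * coeff k F := by
  cases k with
  | zero => simp
  | succ n =>
    rw [coeff_succ_X_mul, coeff_derivative]
    push_cast
    ring

open PowerSeries in
lemma NRquartic (F : PowerSeries ℂ) (k : ℕ) :
    (k : ℂ) * coeff k (F ^ 4) = 4 * coeff k (F ^ 3 * (X * d⁄dX ℂ F)) := by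
  have hD : (d⁄dX ℂ) (F ^ 4) = (4 : ℕ) • (F ^ 3 • (d⁄dX ℂ) F) := by
    have := Derivation.leibniz_pow (d⁄dX ℂ) F 4
    simpa using this
  have h1 : X * (d⁄dX ℂ) (F ^ 4) = 4 * (F ^ 3 * (X * (d⁄dX ℂ) F)) := by
    rw [hD]
    simp only [smul_eq_mul, nsmul_eq_mul]
    push_cast
    ring
  have h2 := NRcoeff_X_dX (F ^ 4) k
  have h4 : (4 : ℂ⟦X⟧) * (F ^ 3 * (X * d⁄dX ℂ F)) = (4 : ℂ) • (F ^ 3 * (X * d⁄dX ℂ F)) := by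
    rw [PowerSeries.smul_eq_C_mul, map_ofNat]
  rw [← h2, h1, h4, map_smul, smul_eq_mul]

open PowerSeries in
lemma NRkey0 (A : ℕ → ℂ) (α : ℂ) (k n : ℕ) :
    coeff k (NRP A α 0 * NRP A α n) =
      ∑ i ∈ Ico 1 k, A i * (A (k - i) * (((k - i : ℕ) : ℂ) * α) ^ n) := by
  rw [NRcoeff_mul_Ico _ _ (NRP_coeff_zero _ _ _) (NRP_coeff_zero _ _ _)]
  refine Finset.sum_congr rfl fun i hi => ?_
  obtain ⟨h1, h2⟩ := Finset.mem_Ico.1 hi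
  have hi0 : i ≠ 0 := by omega
  have hk0 : k - i ≠ 0 := by omega
  simp [NRP_coeff, NRB, hi0, hk0]

open PowerSeries in
lemma NRkey1 (A : ℕ → ℂ) (α : ℂ) (k n : ℕ) :
    coeff k (NRP A α 1 * NRP A α n) =
      ∑ i ∈ Ico 1 k, (A i * ((i : ℂ) * α)) * (A (k - i) * (((k - i : ℕ) : ℂ) * α) ^ n) := by
  rw [NRcoeff_mul_Ico _ _ (NRP_coeff_zero _ _ _) (NRP_coeff_zero _ _ _)]
  refine Finset.sum_congr rfl fun i hi => ?_
  obtain ⟨h1, h2⟩ := Finset.mem_Ico.1 hi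
  have hi0 : i ≠ 0 := by omega
  have hk0 : k - i ≠ 0 := by omega
  simp [NRP_coeff, NRB, hi0, hk0]

open PowerSeries in
lemma NRcoeff0_mul (φ ψ : PowerSeries ℂ) (h0φ : coeff 0 φ = 0) (h0ψ : coeff 0 ψ = 0) :
    coeff 0 (φ * ψ) = 0 := by
  rw [NRcoeff_mul_Ico _ _ h0φ h0ψ]; simp

open PowerSeries in
lemma NRcubic_coeff (A : ℕ → ℂ) (α : ℂ) {k : ℕ} (hk : 2 ≤ k) :
    coeff k (NRP A α 0 ^ 3) =
      ∑ j ∈ Ico 2 k, ∑ l ∈ Ico 1 j, A (k - j) * A (j - l) * A l := by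
  have z : ∀ n : ℕ, coeff 0 (NRP A α n) = 0 := NRP_coeff_zero A α
  have hz2 : coeff 0 (NRP A α 0 * NRP A α 0) = 0 := NRcoeff0_mul _ _ (z 0) (z 0)
  rw [show NRP A α 0 ^ 3 = NRP A α 0 * NRP A α 0 * NRP A α 0 by ring]
  rw [NRcoeff_mul_Ico _ _ hz2 (z 0)]
  rw [Finset.sum_eq_sum_Ico_succ_bot (by omega : 1 < k)]
  have h1 : coeff 1 (NRP A α 0 * NRP A α 0) = 0 := by
    rw [NRcoeff_mul_Ico _ _ (z 0) (z 0)]; simp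
  rw [h1, zero_mul, zero_add]
  refine Finset.sum_congr rfl fun j hj => ?_
  obtain ⟨hj2, hjk⟩ := Finset.mem_Ico.1 hj
  have hkj : k - j ≠ 0 := by omega
  rw [NRkey0, Finset.sum_mul]
  refine Finset.sum_congr rfl fun l hl => ?_
  obtain ⟨hl1, hlj⟩ := Finset.mem_Ico.1 hl
  have hl0 : l ≠ 0 := by omega
  have hjl : j - l ≠ 0 := by omega
  simp only [NRP_coeff, NRB, hkj, if_false, pow_zero, mul_one]
  ring

open PowerSeries in
lemma NRquartic_coeff (A : ℕ → ℂ) (α : ℂ) (k : ℕ) :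
    coeff k (NRP A α 0 ^ 4) =
      ∑ i ∈ Ico 1 k, ∑ j ∈ Ico 1 (k - i), ∑ l ∈ Ico 1 (k - i - j),
        A i * A j * A l * A (k - i - j - l) := by
  have z : ∀ n : ℕ, coeff 0 (NRP A α n) = 0 := NRP_coeff_zero A α
  have hz2 : coeff 0 (NRP A α 0 * NRP A α 0) = 0 := NRcoeff0_mul _ _ (z 0) (z 0)
  have hz3 : coeff 0 (NRP A α 0 * (NRP A α 0 * NRP A α 0)) = 0 := NRcoeff0_mul _ _ (z 0) hz2
  rw [show NRP A α 0 ^ 4 = NRP A α 0 * (NRP A α 0 * (NRP A α 0 * NRP A α 0)) by ring]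
  rw [NRcoeff_mul_Ico _ _ (z 0) hz3]
  refine Finset.sum_congr rfl fun i hi => ?_
  obtain ⟨hi1, hik⟩ := Finset.mem_Ico.1 hi
  have hi0 : i ≠ 0 := by omega
  rw [NRcoeff_mul_Ico _ _ (z 0) hz2, Finset.mul_sum]
  refine Finset.sum_congr rfl fun j hj => ?_
  obtain ⟨hj1, hjk⟩ := Finset.mem_Ico.1 hj
  have hj0 : j ≠ 0 := by omega
  rw [NRcoeff_mul_Ico _ _ (z 0) (z 0), Finset.mul_sum, Finset.mul_sum]
  refine Finset.sum_congr rfl fun l hl => ?_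
  obtain ⟨hl1, hlk⟩ := Finset.mem_Ico.1 hl
  have hl0 : l ≠ 0 := by omega
  have hm0 : k - i - j - l ≠ 0 := by omega
  simp only [NRP_coeff, NRB, hi0, hj0, hl0, hm0, if_false, pow_zero, mul_one]
  ring

open PowerSeries in
lemma NRP1_eq (A : ℕ → ℂ) (α : ℂ) :
    NRP A α 1 = C α * (X * d⁄dX ℂ (NRP A α 0)) := by
  ext k
  rw [coeff_C_mul, NRcoeff_X_dX, NRP_coeff, NRP_coeff]
  simp only [pow_zero, pow_one, mul_one]
  ring

open PowerSeries in
lemma NRquartic_s (A : ℕ → ℂ) (α : ℂ) (k : ℕ) :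
    coeff k (NRP A α 0 ^ 3 * NRP A α 1) =
      ((k : ℂ) * α / 4) * coeff k (NRP A α 0 ^ 4) := by
  rw [NRP1_eq, show NRP A α 0 ^ 3 * (C α * (X * d⁄dX ℂ (NRP A α 0)))
      = C α * (NRP A α 0 ^ 3 * (X * d⁄dX ℂ (NRP A α 0))) by ring, coeff_C_mul]
  linear_combination (-(α / 4)) * NRquartic (NRP A α 0) k

open PowerSeries in
lemma NRcoeff_identity (a b c d g h p q r s : ℝ) (α : ℂ)
    (hroot : α ^ 4 - (b : ℂ) * α ^ 2 + (a : ℂ) = 0)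
    (A : ℕ → ℂ) (hrec : NonReversibleRec a b c d g h p q r s α A) (k : ℕ) :
    coeff k (NRP A α 4) - (b : ℂ) * coeff k (NRP A α 2) + (a : ℂ) * coeff k (NRP A α 0) =
      (c : ℂ) * coeff k (NRP A α 0 * NRP A α 2)
      + (d : ℂ) * coeff k (NRP A α 1 * NRP A α 1)
      + (g : ℂ) * coeff k (NRP A α 0 * NRP A α 0)
      + (h : ℂ) * coeff k (NRP A α 0 ^ 3)
      + (p : ℂ) * coeff k (NRP A α 0 * NRP A α 3)
      + (q : ℂ) * coeff k (NRP A α 1 * NRP A α 2)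
      + (r : ℂ) * coeff k (NRP A α 0 * NRP A α 1)
      + (s : ℂ) * coeff k (NRP A α 0 ^ 3 * NRP A α 1) := by
  have z : ∀ n : ℕ, coeff 0 (NRP A α n) = 0 := NRP_coeff_zero A α
  match k, Nat.lt_or_ge k 2 with
  | 0, _ =>
    simp only [z, NRcoeff0_mul _ _ (z 0) (z 2), NRcoeff0_mul _ _ (z 1) (z 1),
      NRcoeff0_mul _ _ (z 0) (z 0), NRcoeff0_mul _ _ (z 0) (z 3),
      NRcoeff0_mul _ _ (z 1) (z 2), NRcoeff0_mul _ _ (z 0) (z 1)]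
    have h3 : coeff 0 (NRP A α 0 ^ 3) = 0 := by
      rw [show NRP A α 0 ^ 3 = NRP A α 0 * NRP A α 0 * NRP A α 0 by ring]
      exact NRcoeff0_mul _ _ (NRcoeff0_mul _ _ (z 0) (z 0)) (z 0)
    have h4 : coeff 0 (NRP A α 0 ^ 3 * NRP A α 1) = 0 := NRcoeff0_mul _ _ h3 (z 1)
    rw [h3, h4]
    ring
  | 1, _ =>
    have hIco : ∀ (φ ψ : ℂ⟦X⟧), coeff 0 φ = 0 → coeff 0 ψ = 0 → coeff 1 (φ * ψ) = 0 := by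
      intro φ ψ h0φ h0ψ
      rw [NRcoeff_mul_Ico _ _ h0φ h0ψ]
      simp
    have h3 : coeff 1 (NRP A α 0 ^ 3) = 0 := by
      rw [show NRP A α 0 ^ 3 = NRP A α 0 * NRP A α 0 * NRP A α 0 by ring]
      exact hIco _ _ (NRcoeff0_mul _ _ (z 0) (z 0)) (z 0)
    have h3' : coeff 0 (NRP A α 0 ^ 3) = 0 := by
      rw [show NRP A α 0 ^ 3 = NRP A α 0 * NRP A α 0 * NRP A α 0 by ring]
      exact NRcoeff0_mul _ _ (NRcoeff0_mul _ _ (z 0) (z 0)) (z 0)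
    rw [hIco _ _ (z 0) (z 2), hIco _ _ (z 1) (z 1), hIco _ _ (z 0) (z 0), h3,
      hIco _ _ (z 0) (z 3), hIco _ _ (z 1) (z 2), hIco _ _ (z 0) (z 1), hIco _ _ h3' (z 1)]
    have hL : coeff 1 (NRP A α 4) - (b : ℂ) * coeff 1 (NRP A α 2)
        + (a : ℂ) * coeff 1 (NRP A α 0)
        = (α ^ 4 - (b : ℂ) * α ^ 2 + (a : ℂ)) * NRB A 1 := by
      simp only [NRP_coeff]
      push_cast
      ring
    rw [hL, hroot]
    ring
  | (m + 2), Or.inr hk =>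
    set k := m + 2
    have hk2 : 2 ≤ k := hk
    -- left side
    have hk0 : k ≠ 0 := by omega
    have hL : coeff k (NRP A α 4) - (b : ℂ) * coeff k (NRP A α 2)
        + (a : ℂ) * coeff k (NRP A α 0)
        = (((k : ℂ) * α) ^ 4 - (b : ℂ) * ((k : ℂ) * α) ^ 2 + (a : ℂ)) * A k := by
      simp only [NRP_coeff, NRB, hk0, if_false]
      ring
    have e1 : (∑ i ∈ Finset.Ico 1 k,
        ((p : ℂ) * ((k - i : ℕ) : ℂ) ^ 3 * α ^ 3
          + (c : ℂ) * ((k - i : ℕ) : ℂ) ^ 2 * α ^ 2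
          + (q : ℂ) * (i : ℂ) * ((k - i : ℕ) : ℂ) ^ 2 * α ^ 3
          + (d : ℂ) * (i : ℂ) * ((k - i : ℕ) : ℂ) * α ^ 2
          + (r : ℂ) * ((k - i : ℕ) : ℂ) * α + (g : ℂ))
          * A (k - i) * A i) =
        (c : ℂ) * coeff k (NRP A α 0 * NRP A α 2)
        + (d : ℂ) * coeff k (NRP A α 1 * NRP A α 1)
        + (g : ℂ) * coeff k (NRP A α 0 * NRP A α 0)
        + (p : ℂ) * coeff k (NRP A α 0 * NRP A α 3)
        + (q : ℂ) * coeff k (NRP A α 1 * NRP A α 2)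
        + (r : ℂ) * coeff k (NRP A α 0 * NRP A α 1) := by
      rw [NRkey0 A α k 2, NRkey1 A α k 1, NRkey0 A α k 0, NRkey0 A α k 3, NRkey1 A α k 2,
        NRkey0 A α k 1]
      rw [Finset.mul_sum, Finset.mul_sum, Finset.mul_sum, Finset.mul_sum, Finset.mul_sum,
        Finset.mul_sum, ← Finset.sum_add_distrib, ← Finset.sum_add_distrib,
        ← Finset.sum_add_distrib, ← Finset.sum_add_distrib, ← Finset.sum_add_distrib]
      refine Finset.sum_congr rfl fun i _ => ?_
      ring
    have e2 : (∑ j ∈ Finset.Ico 2 k, ∑ l ∈ Finset.Ico 1 j, A (k - j) * A (j - l) * A l)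
        = coeff k (NRP A α 0 ^ 3) := (NRcubic_coeff A α hk2).symm
    have e3 : (s : ℂ) * ((k : ℂ) * α / 4) *
          (∑ i ∈ Finset.Ico 1 k, ∑ j ∈ Finset.Ico 1 (k - i),
            ∑ l ∈ Finset.Ico 1 (k - i - j),
              A i * A j * A l * A (k - i - j - l))
        = (s : ℂ) * coeff k (NRP A α 0 ^ 3 * NRP A α 1) := by
      rw [NRquartic_s, NRquartic_coeff]
      ring
    calc coeff k (NRP A α 4) - (b : ℂ) * coeff k (NRP A α 2)
        + (a : ℂ) * coeff k (NRP A α 0)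
        = (((k : ℂ) * α) ^ 4 - (b : ℂ) * ((k : ℂ) * α) ^ 2 + (a : ℂ)) * A k := hL
      _ = _ := by
          rw [hrec k hk2, e1, e2, e3]
          ring

open PowerSeries in
lemma NRsummableP (A : ℕ → ℂ) (α : ℂ) (M Q : ℝ) (hM : 0 ≤ M) (hQ0 : 0 < Q) (hQ1 : Q ≤ 1)
    (hbound : ∀ k : ℕ, 1 ≤ k → ‖A k‖ ≤ M * Q ^ k) (n : ℕ) {x : ℂ}
    (hx : ‖x‖ < 1) :
    Summable (fun k : ℕ => ‖coeff k (NRP A α n) * x ^ k‖) :=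
  (NRS_summable_norm A α M Q hM hQ0 hQ1 hbound n hx).congr (fun k => by rw [NRP_coeff])

open PowerSeries in
lemma NRE_eq_tsum (A : ℕ → ℂ) (α : ℂ) (hre : α.re < 0) (M Q : ℝ) (hM : 0 ≤ M) (hQ0 : 0 < Q)
    (hQ1 : Q ≤ 1) (hbound : ∀ k : ℕ, 1 ≤ k → ‖A k‖ ≤ M * Q ^ k)
    (n : ℕ) {z : ℝ} (hz : 0 < z) :
    NRE A α n z = ∑' k : ℕ, coeff k (NRP A α n) * Complex.exp (α * (z : ℂ)) ^ k := by
  have hx : ‖Complex.exp (α * (z : ℂ))‖ < 1 := NRabs_exp_lt α hre hz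
  have hsum : Summable (fun k : ℕ => coeff k (NRP A α n) * Complex.exp (α * (z : ℂ)) ^ k) :=
    (NRsummableP A α M Q hM hQ0 hQ1 hbound n hx).of_norm
  rw [Summable.tsum_eq_zero_add hsum]
  have h0 : coeff 0 (NRP A α 0) = 0 := NRP_coeff_zero A α 0
  rw [NRP_coeff_zero, zero_mul, zero_add, NRE]
  refine tsum_congr fun k => ?_
  rw [NRP_coeff]
  have hB : NRB A (k + 1) = A (k + 1) := by simp [NRB]
  rw [hB, ← Complex.exp_nat_mul]
  have hc : ((k + 1 : ℕ) : ℂ) = ((k : ℕ) : ℂ) + 1 := by push_cast; ring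
  rw [hc, show (((k : ℕ) : ℂ) + 1) * (α * (z : ℂ)) = (((k : ℕ) : ℂ) + 1) * α * (z : ℂ) by ring]

open PowerSeries in
lemma NRmain_ode (a b c d g h p q r s : ℝ) (α : ℂ) (hre : α.re < 0)
    (hroot : α ^ 4 - (b : ℂ) * α ^ 2 + (a : ℂ) = 0)
    (A : ℕ → ℂ) (hrec : NonReversibleRec a b c d g h p q r s α A)
    (M Q : ℝ) (hM : 0 ≤ M) (hQ0 : 0 < Q) (hQ1 : Q ≤ 1)
    (hbound : ∀ k : ℕ, 1 ≤ k → ‖A k‖ ≤ M * Q ^ k) {z : ℝ} (hz : 0 < z) :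
    NRE A α 4 z - (b : ℂ) * NRE A α 2 z + (a : ℂ) * NRE A α 0 z =
      (c : ℂ) * NRE A α 0 z * NRE A α 2 z + (d : ℂ) * (NRE A α 1 z) ^ 2
      + (g : ℂ) * (NRE A α 0 z) ^ 2 + (h : ℂ) * (NRE A α 0 z) ^ 3
      + (p : ℂ) * NRE A α 0 z * NRE A α 3 z
      + (q : ℂ) * NRE A α 1 z * NRE A α 2 z
      + (r : ℂ) * NRE A α 0 z * NRE A α 1 z
      + (s : ℂ) * (NRE A α 0 z) ^ 3 * NRE A α 1 z := by
  set x : ℂ := Complex.exp (α * (z : ℂ)) with hxdef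
  have hx : ‖x‖ < 1 := NRabs_exp_lt α hre hz
  have hS : ∀ n : ℕ, Summable (fun k : ℕ => ‖coeff k (NRP A α n) * x ^ k‖) :=
    fun n => NRsummableP A α M Q hM hQ0 hQ1 hbound n hx
  have hE : ∀ n : ℕ, NRE A α n z = ∑' k : ℕ, coeff k (NRP A α n) * x ^ k :=
    fun n => NRE_eq_tsum A α hre M Q hM hQ0 hQ1 hbound n hz
  have hpow3 : NRP A α 0 * NRP A α 0 * NRP A α 0 = NRP A α 0 ^ 3 := by ring
  have S00 := NRsummable_mul x _ _ (hS 0) (hS 0)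
  have S000 : Summable (fun k : ℕ => ‖coeff k (NRP A α 0 ^ 3) * x ^ k‖) :=
    (NRsummable_mul x _ _ S00 (hS 0)).congr (fun k => by rw [hpow3])
  have S02 := NRsummable_mul x _ _ (hS 0) (hS 2)
  have S11 := NRsummable_mul x _ _ (hS 1) (hS 1)
  have S03 := NRsummable_mul x _ _ (hS 0) (hS 3)
  have S12 := NRsummable_mul x _ _ (hS 1) (hS 2)
  have S01 := NRsummable_mul x _ _ (hS 0) (hS 1)
  have S31 := NRsummable_mul x _ _ S000 (hS 1)
  have M02 := NRtsum_mul x _ _ (hS 0) (hS 2)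
  have M11 := NRtsum_mul x _ _ (hS 1) (hS 1)
  have M00 := NRtsum_mul x _ _ (hS 0) (hS 0)
  have M03 := NRtsum_mul x _ _ (hS 0) (hS 3)
  have M12 := NRtsum_mul x _ _ (hS 1) (hS 2)
  have M01 := NRtsum_mul x _ _ (hS 0) (hS 1)
  have M000 : (∑' k : ℕ, coeff k (NRP A α 0 * NRP A α 0) * x ^ k)
      * (∑' k : ℕ, coeff k (NRP A α 0) * x ^ k)
      = ∑' k : ℕ, coeff k (NRP A α 0 ^ 3) * x ^ k := by
    rw [NRtsum_mul x _ _ S00 (hS 0)]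
    exact tsum_congr fun k => by rw [hpow3]
  have M31 := NRtsum_mul x (NRP A α 0 ^ 3) (NRP A α 1) S000 (hS 1)
  have key : (∑' k : ℕ, coeff k (NRP A α 4) * x ^ k)
      - (b : ℂ) * (∑' k : ℕ, coeff k (NRP A α 2) * x ^ k)
      + (a : ℂ) * (∑' k : ℕ, coeff k (NRP A α 0) * x ^ k)
      = (c : ℂ) * ((∑' k : ℕ, coeff k (NRP A α 0) * x ^ k)
          * (∑' k : ℕ, coeff k (NRP A α 2) * x ^ k))
        + (d : ℂ) * ((∑' k : ℕ, coeff k (NRP A α 1) * x ^ k)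
          * (∑' k : ℕ, coeff k (NRP A α 1) * x ^ k))
        + (g : ℂ) * ((∑' k : ℕ, coeff k (NRP A α 0) * x ^ k)
          * (∑' k : ℕ, coeff k (NRP A α 0) * x ^ k))
        + (h : ℂ) * ((∑' k : ℕ, coeff k (NRP A α 0) * x ^ k)
          * (∑' k : ℕ, coeff k (NRP A α 0) * x ^ k)
          * (∑' k : ℕ, coeff k (NRP A α 0) * x ^ k))
        + (p : ℂ) * ((∑' k : ℕ, coeff k (NRP A α 0) * x ^ k)
          * (∑' k : ℕ, coeff k (NRP A α 3) * x ^ k))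
        + (q : ℂ) * ((∑' k : ℕ, coeff k (NRP A α 1) * x ^ k)
          * (∑' k : ℕ, coeff k (NRP A α 2) * x ^ k))
        + (r : ℂ) * ((∑' k : ℕ, coeff k (NRP A α 0) * x ^ k)
          * (∑' k : ℕ, coeff k (NRP A α 1) * x ^ k))
        + (s : ℂ) * ((∑' k : ℕ, coeff k (NRP A α 0) * x ^ k)
          * (∑' k : ℕ, coeff k (NRP A α 0) * x ^ k)
          * (∑' k : ℕ, coeff k (NRP A α 0) * x ^ k)
          * (∑' k : ℕ, coeff k (NRP A α 1) * x ^ k)) := by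
    rw [M02, M11, M00]
    rw [M000, M03, M12, M01, M31]
    simp only [← tsum_mul_left]
    rw [← Summable.tsum_sub (hS 4).of_norm (((hS 2).of_norm).mul_left (b : ℂ)),
      ← Summable.tsum_add ((hS 4).of_norm.sub (((hS 2).of_norm).mul_left (b : ℂ)))
        (((hS 0).of_norm).mul_left (a : ℂ))]
    rw [← Summable.tsum_add (S02.of_norm.mul_left _) (S11.of_norm.mul_left _),
      ← Summable.tsum_add ((S02.of_norm.mul_left _).add (S11.of_norm.mul_left _))
        (S00.of_norm.mul_left _),
      ← Summable.tsum_add (((S02.of_norm.mul_left _).add (S11.of_norm.mul_left _)).add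
        (S00.of_norm.mul_left _)) (S000.of_norm.mul_left _),
      ← Summable.tsum_add ((((S02.of_norm.mul_left _).add (S11.of_norm.mul_left _)).add
        (S00.of_norm.mul_left _)).add (S000.of_norm.mul_left _)) (S03.of_norm.mul_left _),
      ← Summable.tsum_add (((((S02.of_norm.mul_left _).add (S11.of_norm.mul_left _)).add
        (S00.of_norm.mul_left _)).add (S000.of_norm.mul_left _)).add
        (S03.of_norm.mul_left _)) (S12.of_norm.mul_left _),
      ← Summable.tsum_add ((((((S02.of_norm.mul_left _).add (S11.of_norm.mul_left _)).add
        (S00.of_norm.mul_left _)).add (S000.of_norm.mul_left _)).add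
        (S03.of_norm.mul_left _)).add (S12.of_norm.mul_left _)) (S01.of_norm.mul_left _),
      ← Summable.tsum_add (((((((S02.of_norm.mul_left _).add (S11.of_norm.mul_left _)).add
        (S00.of_norm.mul_left _)).add (S000.of_norm.mul_left _)).add
        (S03.of_norm.mul_left _)).add (S12.of_norm.mul_left _)).add
        (S01.of_norm.mul_left _)) (S31.of_norm.mul_left _)]
    refine tsum_congr fun k => ?_
    linear_combination (x ^ k) * NRcoeff_identity a b c d g h p q r s α hroot A hrec k
  rw [hE 4, hE 2, hE 0, hE 1, hE 3]
  linear_combination key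

/-- Main theorem, non-reversible case: if `Re α < 0`, `α⁴ − bα² + a = 0`, the
coefficients `(a_k)` satisfy the non-reversible recursion with parameter `α` and
the geometric bound `|a_k| ≤ M Q^k` (`M ≥ 0`, `0 < Q ≤ 1`), then
`u(z) = Σ_{k=1}^∞ a_k e^{kαz}` is infinitely differentiable on `(0, ∞)`,
satisfies
`u'''' − b u'' + a u = c u u'' + d(u')² + g u² + h u³ + p u u''' + q u' u'' + r u u' + s u³ u'`
there, and `u, u', u'', u'''` all tend to `0` as `z → +∞`. -/
theorem nonreversible_series_is_homoclinic_solution (a b c d g h p q r s : ℝ)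
    (α : ℂ) (hre : α.re < 0) (hroot : α ^ 4 - (b : ℂ) * α ^ 2 + (a : ℂ) = 0)
    (A : ℕ → ℂ) (hrec : NonReversibleRec a b c d g h p q r s α A)
    (M Q : ℝ) (hM : 0 ≤ M) (hQ0 : 0 < Q) (hQ1 : Q ≤ 1)
    (hbound : ∀ k : ℕ, 1 ≤ k → ‖A k‖ ≤ M * Q ^ k)
    (u : ℝ → ℂ)
    (hu : ∀ z : ℝ, u z =
      ∑' k : ℕ, A (k + 1) * Complex.exp ((((k : ℕ) : ℂ) + 1) * α * (z : ℂ))) :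
    ContDiffOn ℝ (⊤ : ℕ∞) u (Set.Ioi 0) ∧
    (∀ z ∈ Set.Ioi (0 : ℝ),
      iteratedDeriv 4 u z - (b : ℂ) * iteratedDeriv 2 u z + (a : ℂ) * u z =
        (c : ℂ) * u z * iteratedDeriv 2 u z + (d : ℂ) * (iteratedDeriv 1 u z) ^ 2
          + (g : ℂ) * (u z) ^ 2 + (h : ℂ) * (u z) ^ 3
          + (p : ℂ) * u z * iteratedDeriv 3 u z
          + (q : ℂ) * iteratedDeriv 1 u z * iteratedDeriv 2 u z
          + (r : ℂ) * u z * iteratedDeriv 1 u z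
          + (s : ℂ) * (u z) ^ 3 * iteratedDeriv 1 u z) ∧
    (∀ n : ℕ, n ≤ 3 → Tendsto (iteratedDeriv n u) atTop (nhds 0)) := by
  have hiter := NRiter A α hre M Q hM hQ0 hQ1 hbound u hu
  refine ⟨?_, ?_, ?_⟩
  · have hAn : AnalyticOnNhd ℝ u (Set.Ioi 0) :=
      fun z hz => NRanalyticAt A α hre M Q hM hQ0 hQ1 hbound u hu hz
    exact hAn.contDiffOn (uniqueDiffOn_Ioi 0)
  · intro z hz
    have hz0 : 0 < z := hz
    have hu0 : u z = NRE A α 0 z := by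
      have := hiter 0 hz
      rwa [iteratedDeriv_zero] at this
    rw [hiter 4 hz, hiter 2 hz, hiter 1 hz, hiter 3 hz, hu0]
    exact NRmain_ode a b c d g h p q r s α hre hroot A hrec M Q hM hQ0 hQ1 hbound hz0
  · intro n _
    have hev : NRE A α n =ᶠ[atTop] iteratedDeriv n u := by
      filter_upwards [eventually_gt_atTop (0 : ℝ)] with z hz
      exact (hiter n hz).symm
    exact (NRtendsto A α hre M Q hM hQ0 hQ1 hbound n).congr' hev
end
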